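/- arXiv:1812.10878 — 7 statements merged into one kernel-verified Lean document; each statement's English description precedes it below -/
import Mathlib

section
/- Let K_{n=1}^∞ a_n/1 be a continued fraction with all a_n nonzero complex numbers. Suppose there exist complex numbers α ≠ β such that the even-indexed approximants K_{2n} converge to α and the odd-indexed approximants K_{2n+1} converge to β. Then |a_n| → ∞ as n → ∞. -/
/-!
For `c ∉ {α, β}` put `x m = (A m - α B m) / (A m - c B m)`, the image of the approximant
`A m / B m` under the Möbius map `z ↦ (z - α) / (z - c)`. Since `A - α B` and `A - c B` solve the
recurrence of the continued fraction, the cross-ratio of four consecutive `x m` is governed by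
`a (m + 2)`:
`a (m + 2) (x (m + 3) - x (m + 1)) (x (m + 2) - x m) = -(x (m + 3) - x (m + 2)) (x (m + 1) - x m)`.
The `x m` cluster at `0` for odd `m`, at `ξ = (β - α) / (β - c)` for even `m`, and at `1` where
`B m = 0`; the last never happens twice in a row because the casoratian
`A (m + 1) B m - A m B (m + 1) = ±a 1 ⋯ a m` does not vanish, so consecutive differences stay
away from `0`.
Along a parity class free of zeros of `B` the differences `x (m + 2) - x m` tend to `0`, which
forces `‖a (m + 2)‖ → ∞`.
-/

open Filter Topology

section Recurrence

variable {K : Type*} [Field K] {a u v : ℕ → K}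

def SatisfiesRecurrence (a u : ℕ → K) : Prop :=
  ∀ n, u (n + 2) = u (n + 1) + a (n + 1) * u n

theorem SatisfiesRecurrence.sub_mul (hu : SatisfiesRecurrence a u) (hv : SatisfiesRecurrence a v)
    (c : K) : SatisfiesRecurrence a fun n => u n - c * v n := fun n => by
  beta_reduce; rw [hu n, hv n]; ring

def casoratian (u v : ℕ → K) (m : ℕ) : K := u (m + 1) * v m - u m * v (m + 1)

theorem casoratian_succ (hu : SatisfiesRecurrence a u) (hv : SatisfiesRecurrence a v) (m : ℕ) :
    casoratian u v (m + 1) = -a (m + 1) * casoratian u v m := by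
  simp only [casoratian, hu m, hv m]; ring

theorem casoratian_ne_zero (hu : SatisfiesRecurrence a u) (hv : SatisfiesRecurrence a v)
    (ha : ∀ n, 1 ≤ n → a n ≠ 0) (h₀ : casoratian u v 0 ≠ 0) (m : ℕ) : casoratian u v m ≠ 0 := by
  induction m with
  | zero => exact h₀
  | succ m ih =>
    rw [casoratian_succ hu hv]
    exact mul_ne_zero (neg_ne_zero.2 (ha _ m.succ_pos)) ih

theorem ne_zero_and_succ_ne_zero_of_casoratian_ne_zero {m : ℕ} (h : casoratian u v m ≠ 0)
    (hv : v m = 0) : u m ≠ 0 ∧ v (m + 1) ≠ 0 := by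
  simp only [casoratian, hv, mul_zero, zero_sub, neg_ne_zero] at h
  exact ⟨left_ne_zero_of_mul h, right_ne_zero_of_mul h⟩

theorem SatisfiesRecurrence.cross_ratio {P R : ℕ → K} (hP : SatisfiesRecurrence a P)
    (hR : SatisfiesRecurrence a R) {m : ℕ} (h₀ : R m ≠ 0) (h₁ : R (m + 1) ≠ 0)
    (h₂ : R (m + 2) ≠ 0) (h₃ : R (m + 3) ≠ 0) {x : ℕ → K} (hx : ∀ n, x n = P n / R n) :
    a (m + 2) * ((x (m + 3) - x (m + 1)) * (x (m + 2) - x m)) =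
      -((x (m + 3) - x (m + 2)) * (x (m + 1) - x m)) := by
  simp only [hx]
  field_simp
  rw [hP (m + 1), hR (m + 1), hP m, hR m]
  ring

end Recurrence

theorem Filter.eventually_atTop_of_two_mul_add {p : ℕ → Prop} (k : ℕ)
    (h₀ : ∀ᶠ n in atTop, p (2 * n + k)) (h₁ : ∀ᶠ n in atTop, p (2 * n + k + 1)) :
    ∀ᶠ m in atTop, p m := by
  obtain ⟨N, hN⟩ := eventually_atTop.1 (h₀.and h₁)
  refine eventually_atTop.2 ⟨2 * N + k, fun m hm => ?_⟩
  obtain ⟨q, rfl | rfl⟩ : ∃ q, m = 2 * q + k ∨ m = 2 * q + k + 1 := ⟨(m - k) / 2, by omega⟩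
  · exact (hN q (by omega)).1
  · exact (hN q (by omega)).2

theorem Filter.tendsto_atTop_of_two_mul_add {X : Type*} {u : ℕ → X} {l : Filter X} (k : ℕ)
    (h₀ : Tendsto (fun n => u (2 * n + k)) atTop l)
    (h₁ : Tendsto (fun n => u (2 * n + k + 1)) atTop l) : Tendsto u atTop l :=
  fun _ hs => eventually_atTop_of_two_mul_add k (h₀ hs) (h₁ hs)

theorem tendsto_two_mul_add_atTop (k : ℕ) : Tendsto (fun n => 2 * n + k) atTop atTop :=
  tendsto_atTop_mono (fun n => show n ≤ 2 * n + k by omega) tendsto_id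

theorem isBoundedUnder_norm_of_tendsto_sub {ι E : Type*} [SeminormedAddCommGroup E]
    {l : Filter ι} {x y : ι → E} (hxy : Tendsto (fun i => x i - y i) l (𝓝 0))
    (hy : IsBoundedUnder (· ≤ ·) l (norm ∘ y)) : IsBoundedUnder (· ≤ ·) l (norm ∘ x) :=
  (isBoundedUnder_le_add hy (tendsto_zero_iff_norm_tendsto_zero.1 hxy).isBoundedUnder_le).mono_le
    (Eventually.of_forall fun i => norm_le_norm_add_norm_sub' (x i) (y i))

theorem tendsto_mul_sub_add_two {R : Type*} [NonUnitalSeminormedRing R] {x : ℕ → R}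
    (hx : IsBoundedUnder (· ≤ ·) atTop (norm ∘ x)) (k : ℕ)
    (h : Tendsto (fun n => x (2 * n + k + 2) - x (2 * n + k)) atTop (𝓝 0)) :
    Tendsto (fun m => (x (m + 3) - x (m + 1)) * (x (m + 2) - x m)) atTop (𝓝 0) := by
  have hu : IsBoundedUnder (· ≤ ·) atTop
      (fun n => ‖x (2 * n + k + 1 + 2) - x (2 * n + k + 1)‖) :=
    (isBoundedUnder_le_add ((tendsto_two_mul_add_atTop (k + 3)).isBoundedUnder_comp hx)
      ((tendsto_two_mul_add_atTop (k + 1)).isBoundedUnder_comp hx)).mono_le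
        (Eventually.of_forall fun n => norm_sub_le _ _)
  refine tendsto_atTop_of_two_mul_add k ?_ ?_
  · exact isBoundedUnder_le_mul_tendsto_zero hu h
  · have h₂ : Tendsto (fun n => x (2 * n + k + 1 + 3) - x (2 * n + k + 1 + 1)) atTop (𝓝 0) :=
      (h.comp (tendsto_add_atTop_nat 1)).congr fun n => by
        simp only [Function.comp_apply]; ring_nf
    exact h₂.zero_mul_isBoundedUnder_le hu

theorem eventually_half_le_norm_sub_succ {E : Type*} [SeminormedAddCommGroup E] {x y : ℕ → E}
    {d : ℝ} (hd : 0 < d) (hxy : Tendsto (fun m => x m - y m) atTop (𝓝 0))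
    (hy : ∀ m, d ≤ ‖y (m + 1) - y m‖) : ∀ᶠ m in atTop, d / 2 ≤ ‖x (m + 1) - x m‖ := by
  have hsmall : ∀ᶠ m in atTop, ‖x m - y m‖ < d / 4 :=
    (tendsto_zero_iff_norm_tendsto_zero.1 hxy).eventually (gt_mem_nhds (by positivity))
  filter_upwards [hsmall, (tendsto_add_atTop_nat 1).eventually hsmall] with m h₀ h₁
  have : d ≤ ‖x (m + 1) - x m‖ + ‖x (m + 1) - y (m + 1)‖ + ‖x m - y m‖ :=
    calc d ≤ ‖y (m + 1) - y m‖ := hy m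
      _ = ‖(x (m + 1) - x m) - (x (m + 1) - y (m + 1)) + (x m - y m)‖ := by congr 1; abel
      _ ≤ _ := norm_add_le_of_le (norm_sub_le _ _) le_rfl
  linarith

theorem tendsto_norm_atTop_of_cross_ratio {𝕜 : Type*} [NormedField 𝕜] {a x : ℕ → 𝕜} {δ : ℝ}
    (hδ : 0 < δ)
    (hcr : ∀ᶠ m in atTop, a (m + 2) * ((x (m + 3) - x (m + 1)) * (x (m + 2) - x m)) =
      -((x (m + 3) - x (m + 2)) * (x (m + 1) - x m)))
    (hadj : ∀ᶠ m in atTop, δ ≤ ‖x (m + 1) - x m‖)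
    (hsame : Tendsto (fun m => (x (m + 3) - x (m + 1)) * (x (m + 2) - x m)) atTop (𝓝 0)) :
    Tendsto (fun n => ‖a n‖) atTop atTop := by
  set q := fun m => ‖(x (m + 3) - x (m + 1)) * (x (m + 2) - x m)‖
  have hbound : ∀ᶠ m in atTop, δ * δ ≤ ‖a (m + 2)‖ * q m := by
    filter_upwards [hcr, hadj, (tendsto_add_atTop_nat 2).eventually hadj] with m hm h₀ h₂
    calc δ * δ ≤ ‖x (m + 3) - x (m + 2)‖ * ‖x (m + 1) - x m‖ :=
          mul_le_mul h₂ h₀ hδ.le (norm_nonneg _)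
      _ = ‖a (m + 2)‖ * q m := by rw [← norm_mul, ← norm_neg, ← hm, norm_mul]
  have hq : Tendsto q atTop (𝓝[>] 0) := by
    refine tendsto_nhdsWithin_iff.2 ⟨tendsto_zero_iff_norm_tendsto_zero.1 hsame, ?_⟩
    filter_upwards [hbound] with m hm
    exact pos_of_mul_pos_right ((mul_pos hδ hδ).trans_le hm) (norm_nonneg _)
  rw [← tendsto_add_atTop_iff_nat 2]
  refine tendsto_atTop_mono' atTop ?_ (hq.inv_tendsto_nhdsGT_zero.const_mul_atTop (mul_pos hδ hδ))
  filter_upwards [hbound, hq.eventually self_mem_nhdsWithin] with m hm hqm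
  rw [Pi.inv_apply, ← div_eq_mul_inv, div_le_iff₀ hqm]
  exact hm

section MoebiusNormalization

variable {𝕜 : Type*} [NormedField 𝕜] {A B : ℕ → 𝕜} {α β c ξ : 𝕜}

theorem exists_eventually_ne_zero_two_mul_add (hαβ : α ≠ β)
    (hα : Tendsto (fun n => A (2 * n + 1) / B (2 * n + 1)) atTop (𝓝 α))
    (hβ : Tendsto (fun n => A (2 * n + 2) / B (2 * n + 2)) atTop (𝓝 β)) :
    ∃ k, ∀ᶠ n in atTop, B (2 * n + k) ≠ 0 := by
  rcases ne_or_eq α 0 with h | rfl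
  · exact ⟨1, (hα.eventually_ne h).mono fun n hn hB => hn (by simp [hB])⟩
  · exact ⟨2, (hβ.eventually_ne hαβ.symm).mono fun n hn hB => hn (by simp [hB])⟩

theorem eventually_sub_mul_ne_zero_comp {s : ℕ → ℕ} {L : 𝕜}
    (hA : ∀ m, B m = 0 → A m ≠ 0) (hs : Tendsto (fun n => A (s n) / B (s n)) atTop (𝓝 L))
    (hL : L ≠ c) : ∀ᶠ n in atTop, A (s n) - c * B (s n) ≠ 0 := by
  filter_upwards [hs.eventually_ne hL] with n hn
  by_cases hB : B (s n) = 0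
  · simpa [hB] using hA _ hB
  · rw [show A (s n) - c * B (s n) = B (s n) * (A (s n) / B (s n) - c) by field_simp]
    exact mul_ne_zero hB (sub_ne_zero.2 hn)

theorem eventually_sub_mul_ne_zero (hA : ∀ m, B m = 0 → A m ≠ 0)
    (hα : Tendsto (fun n => A (2 * n + 1) / B (2 * n + 1)) atTop (𝓝 α))
    (hβ : Tendsto (fun n => A (2 * n + 2) / B (2 * n + 2)) atTop (𝓝 β)) (hαc : α ≠ c)
    (hβc : β ≠ c) : ∀ᶠ m in atTop, A m - c * B m ≠ 0 :=
  eventually_atTop_of_two_mul_add 1 (eventually_sub_mul_ne_zero_comp hA hα hαc)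
    (eventually_sub_mul_ne_zero_comp hA hβ hβc)

noncomputable def moebiusApprox (A B : ℕ → 𝕜) (α c : 𝕜) (m : ℕ) : 𝕜 :=
  (A m - α * B m) / (A m - c * B m)

theorem moebiusApprox_of_ne_zero {m : ℕ} (hB : B m ≠ 0) :
    moebiusApprox A B α c m = (A m / B m - α) / (A m / B m - c) := by
  rw [moebiusApprox, ← mul_div_mul_left (A m / B m - α) _ hB]
  congr 1 <;> field_simp

theorem moebiusApprox_of_eq_zero {m : ℕ} (hB : B m = 0) (hA : A m ≠ 0) :
    moebiusApprox A B α c m = 1 := by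
  simp [moebiusApprox, hB, hA]

theorem min_norm_div_sub_pos (hαβ : α ≠ β) (hαc : α ≠ c) (hβc : β ≠ c) :
    0 < min ‖(β - α) / (β - c)‖ (min 1 ‖1 - (β - α) / (β - c)‖) := by
  have hξ₁ : 1 - (β - α) / (β - c) ≠ 0 := by
    rw [sub_ne_zero, ne_comm, ne_eq, div_eq_one_iff_eq (sub_ne_zero.2 hβc), sub_right_inj]
    exact hαc
  exact lt_min (norm_pos_iff.2 (div_ne_zero (sub_ne_zero.2 hαβ.symm) (sub_ne_zero.2 hβc)))
    (lt_min one_pos (norm_pos_iff.2 hξ₁))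

variable [DecidableEq 𝕜]

/-- A zero of `B` is a pole of the approximant, which the Möbius map sends to `1`; there
`A m / B m` is the junk value `0`. -/
noncomputable def moebiusTarget (B : ℕ → 𝕜) (ξ : 𝕜) (m : ℕ) : 𝕜 :=
  if B m = 0 then 1 else if Odd m then 0 else ξ

theorem moebiusTarget_add_two {m : ℕ} (h₀ : B m ≠ 0) (h₂ : B (m + 2) ≠ 0) :
    moebiusTarget B ξ (m + 2) = moebiusTarget B ξ m := by
  simp [moebiusTarget, h₀, h₂, Nat.odd_add]

theorem norm_moebiusTarget_le (m : ℕ) : ‖moebiusTarget B ξ m‖ ≤ 1 + ‖ξ‖ := by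
  unfold moebiusTarget
  split_ifs <;> simp [add_nonneg]

theorem min_le_norm_moebiusTarget_succ_sub (hB : ∀ m, B m = 0 → B (m + 1) ≠ 0) (m : ℕ) :
    min ‖ξ‖ (min 1 ‖1 - ξ‖) ≤ ‖moebiusTarget B ξ (m + 1) - moebiusTarget B ξ m‖ := by
  by_cases h₀ : B m = 0 <;> by_cases h₁ : B (m + 1) = 0
  · exact absurd h₁ (hB m h₀)
  all_goals by_cases hm : Odd m <;>
    simp [moebiusTarget, h₀, h₁, hm, Nat.odd_add_one, norm_sub_rev]

theorem tendsto_moebiusApprox_sub_target_comp {s : ℕ → ℕ} {L : 𝕜}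
    (hA : ∀ m, B m = 0 → A m ≠ 0) (hs : Tendsto (fun n => A (s n) / B (s n)) atTop (𝓝 L))
    (hL : L ≠ c) (hT : ∀ n, B (s n) ≠ 0 → moebiusTarget B ξ (s n) = (L - α) / (L - c)) :
    Tendsto (fun n => moebiusApprox A B α c (s n) - moebiusTarget B ξ (s n)) atTop (𝓝 0) := by
  have hφ : Tendsto (fun n => (A (s n) / B (s n) - α) / (A (s n) / B (s n) - c) -
      (L - α) / (L - c)) atTop (𝓝 0) := by
    simpa using ((hs.sub_const α).div (hs.sub_const c) (sub_ne_zero.2 hL)).sub_const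
      ((L - α) / (L - c))
  refine squeeze_zero_norm (fun n => ?_) (tendsto_zero_iff_norm_tendsto_zero.1 hφ)
  by_cases hB : B (s n) = 0
  · simp [moebiusApprox_of_eq_zero hB (hA _ hB), moebiusTarget, hB]
  · rw [moebiusApprox_of_ne_zero hB, hT n hB]

theorem tendsto_moebiusApprox_sub_target (hA : ∀ m, B m = 0 → A m ≠ 0)
    (hα : Tendsto (fun n => A (2 * n + 1) / B (2 * n + 1)) atTop (𝓝 α))
    (hβ : Tendsto (fun n => A (2 * n + 2) / B (2 * n + 2)) atTop (𝓝 β)) (hαc : α ≠ c)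
    (hβc : β ≠ c) :
    Tendsto (fun m => moebiusApprox A B α c m - moebiusTarget B ((β - α) / (β - c)) m) atTop
      (𝓝 0) :=
  tendsto_atTop_of_two_mul_add 1
    (tendsto_moebiusApprox_sub_target_comp hA hα hαc fun n hB => by simp [moebiusTarget, hB])
    (tendsto_moebiusApprox_sub_target_comp hA hβ hβc fun n hB => by
      simp [moebiusTarget, hB, Nat.odd_add_one])

theorem tendsto_sub_add_two_of_eventually_ne_zero {x : ℕ → 𝕜} {k : ℕ}
    (hk : ∀ᶠ n in atTop, B (2 * n + k) ≠ 0)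
    (hx : Tendsto (fun m => x m - moebiusTarget B ξ m) atTop (𝓝 0)) :
    Tendsto (fun n => x (2 * n + k + 2) - x (2 * n + k)) atTop (𝓝 0) := by
  have h := (hx.comp (tendsto_two_mul_add_atTop (k + 2))).sub
    (hx.comp (tendsto_two_mul_add_atTop k))
  rw [sub_zero] at h
  refine h.congr' ?_
  filter_upwards [hk, (tendsto_add_atTop_nat 1).eventually hk] with n h₀ h₂
  rw [Function.comp_apply, Function.comp_apply, ← add_assoc,
    moebiusTarget_add_two h₀ (by convert h₂ using 2; ring)]
  ring

end MoebiusNormalization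

-- `A (n + 1) / B (n + 1)` is the approximant `K_n`, so `heven` is about `K_{2n}`.
/-- If the even approximants `K_{2n} = A_{2n}/B_{2n}` of the continued fraction
`K_{n=1}^∞ a n / 1` (all `a n ≠ 0`) converge to `α` and the odd approximants
converge to `β` with `α ≠ β`, then `|a n| → ∞`.
Indexing: `A (n+1)/B (n+1)` is the `n`-th approximant, with `A 0 = 1`, `A 1 = 0`
(`b₀ = 0`), `B 0 = 0`, `B 1 = 1`. -/
theorem abs_partial_numerators_tendsto_atTop_of_odd_even_parts_differ
    (a A B : ℕ → ℂ) (α β : ℂ)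
    (ha : ∀ n, 1 ≤ n → a n ≠ 0)
    (hA0 : A 0 = 1) (hA1 : A 1 = 0) (hB0 : B 0 = 0) (hB1 : B 1 = 1)
    (hA : ∀ n, A (n + 2) = A (n + 1) + a (n + 1) * A n)
    (hB : ∀ n, B (n + 2) = B (n + 1) + a (n + 1) * B n)
    (hαβ : α ≠ β)
    (heven : Tendsto (fun n => A (2 * n + 1) / B (2 * n + 1)) atTop (𝓝 α))
    (hodd : Tendsto (fun n => A (2 * n + 2) / B (2 * n + 2)) atTop (𝓝 β)) :
    Tendsto (fun n => ‖a n‖) atTop atTop := by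
  have hW : ∀ m, casoratian A B m ≠ 0 :=
    casoratian_ne_zero hA hB ha (by simp [casoratian, hA0, hA1, hB0, hB1])
  have hpole := fun m => ne_zero_and_succ_ne_zero_of_casoratian_ne_zero (hW m)
  obtain ⟨c, hαc, hβc⟩ : ∃ c : ℂ, α ≠ c ∧ β ≠ c := by
    obtain ⟨c, hc⟩ := (Set.toFinite {α, β}).infinite_compl.nonempty
    simp only [Set.mem_compl_iff, Set.mem_insert_iff, Set.mem_singleton_iff, not_or] at hc
    exact ⟨c, Ne.symm hc.1, Ne.symm hc.2⟩
  have hd := min_norm_div_sub_pos hαβ hαc hβc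
  have hxy := tendsto_moebiusApprox_sub_target (fun m h => (hpole m h).1) heven hodd hαc hβc
  have hR := eventually_sub_mul_ne_zero (fun m h => (hpole m h).1) heven hodd hαc hβc
  obtain ⟨k, hk⟩ := exists_eventually_ne_zero_two_mul_add hαβ heven hodd
  refine tendsto_norm_atTop_of_cross_ratio (half_pos hd) ?_
    (eventually_half_le_norm_sub_succ hd hxy
      (min_le_norm_moebiusTarget_succ_sub fun m h => (hpole m h).2))
    (tendsto_mul_sub_add_two (isBoundedUnder_norm_of_tendsto_sub hxy
      (isBoundedUnder_of ⟨_, norm_moebiusTarget_le⟩)) k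
      (tendsto_sub_add_two_of_eventually_ne_zero hk hxy))
  filter_upwards [hR, (tendsto_add_atTop_nat 1).eventually hR,
    (tendsto_add_atTop_nat 2).eventually hR, (tendsto_add_atTop_nat 3).eventually hR]
    with m h₀ h₁ h₂ h₃
  exact SatisfiesRecurrence.cross_ratio (SatisfiesRecurrence.sub_mul hA hB α)
    (SatisfiesRecurrence.sub_mul hA hB c) h₀ h₁ h₂ h₃ fun n => rfl
end

section
/- With the hypotheses of the previous setup (K_{2n} → α, K_{2n+1} → β, α ≠ β, all a_n ≠ 0), the even-indexed partial numerators satisfy the explicit formula a_{2n} = (K_{2n-2} - K_{2n-3})(K_{2n-1} - K_{2n}) / ((K_{2n-1} - K_{2n-3})(K_{2n} - K_{2n-2})), provided all the denominators occurring are nonzero. -/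
open Filter Topology

/-- With the hypotheses of the previous setup (even approximants `K_{2n} → α`,
odd approximants `K_{2n+1} → β`, `α ≠ β`, all `a n ≠ 0`, all denominator
convergents nonzero), the even-indexed partial numerators satisfy
`a_{2n} = (K_{2n-2} - K_{2n-3})(K_{2n-1} - K_{2n}) /
          ((K_{2n-1} - K_{2n-3})(K_{2n} - K_{2n-2}))`
provided the denominators occurring are nonzero.
Indexing: `K m = A (m+1) / B (m+1)` is the `m`-th approximant, `A 0 = 1`,
`A 1 = 0` (`b₀ = 0`), `B 0 = 0`, `B 1 = 1`. -/
theorem even_partial_numerator_formula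
    (a A B K : ℕ → ℂ) (α β : ℂ)
    (ha : ∀ n, 1 ≤ n → a n ≠ 0)
    (hA0 : A 0 = 1) (hA1 : A 1 = 0) (hB0 : B 0 = 0) (hB1 : B 1 = 1)
    (hA : ∀ n, A (n + 2) = A (n + 1) + a (n + 1) * A n)
    (hB : ∀ n, B (n + 2) = B (n + 1) + a (n + 1) * B n)
    (hBne : ∀ m, B (m + 1) ≠ 0)
    (hK : ∀ m, K m = A (m + 1) / B (m + 1))
    (hαβ : α ≠ β)
    (heven : Tendsto (fun n => K (2 * n)) atTop (𝓝 α))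
    (hodd : Tendsto (fun n => K (2 * n + 1)) atTop (𝓝 β)) :
    ∀ n, 2 ≤ n →
      K (2 * n - 1) - K (2 * n - 3) ≠ 0 →
      K (2 * n) - K (2 * n - 2) ≠ 0 →
      a (2 * n) =
        ((K (2 * n - 2) - K (2 * n - 3)) * (K (2 * n - 1) - K (2 * n))) /
          ((K (2 * n - 1) - K (2 * n - 3)) * (K (2 * n) - K (2 * n - 2))) := by
  -- determinant D m = A (m+1) * B m - A m * B (m+1)
  set D : ℕ → ℂ := fun m => A (m + 1) * B m - A m * B (m + 1) with hD
  have hDrec : ∀ m, D (m + 1) = -a (m + 1) * D m := by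
    intro m
    simp only [hD]
    rw [hA m, hB m]; ring
  -- difference of consecutive approximants
  have hd1 : ∀ m, K (m + 1) - K m = D (m + 1) / (B (m + 2) * B (m + 1)) := by
    intro m
    rw [hK, hK]
    field_simp [hBne]
    simp only [hD]; ring
  -- difference of approximants two apart
  have hd2 : ∀ m, K (m + 2) - K m = D (m + 1) / (B (m + 3) * B (m + 1)) := by
    intro m
    rw [hK, hK]
    field_simp [hBne]
    simp only [hD]
    rw [hA (m + 1), hB (m + 1)]; ring
  intro n hn h1 h2
  obtain ⟨k, rfl⟩ : ∃ k, n = k + 2 := ⟨n - 2, by omega⟩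
  have e1 : 2 * k + 4 - 1 = 2 * k + 3 := by omega
  have e2 : 2 * k + 4 - 2 = 2 * k + 2 := by omega
  have e3 : 2 * k + 4 - 3 = 2 * k + 1 := by omega
  simp only [show 2 * (k + 2) = 2 * k + 4 by ring] at h1 h2 ⊢
  simp only [e1, e2, e3] at h1 h2 ⊢
  have h1' : K (2 * k + 3) - K (2 * k + 1) = D (2 * k + 2) / (B (2 * k + 4) * B (2 * k + 2)) := hd2 (2 * k + 1)
  have h2' : K (2 * k + 4) - K (2 * k + 2) = D (2 * k + 3) / (B (2 * k + 5) * B (2 * k + 3)) := hd2 (2 * k + 2)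
  have hD2 : D (2 * k + 2) ≠ 0 := by
    intro h; apply h1; rw [h1', h, zero_div]
  have hD3 : D (2 * k + 3) ≠ 0 := by
    intro h; apply h2; rw [h2', h, zero_div]
  have ha' : K (2 * k + 2) - K (2 * k + 1) = D (2 * k + 2) / (B (2 * k + 3) * B (2 * k + 2)) := hd1 (2 * k + 1)
  have hb' : K (2 * k + 3) - K (2 * k + 4) = -(D (2 * k + 4) / (B (2 * k + 5) * B (2 * k + 4))) := by
    rw [← hd1 (2 * k + 3)]; ring
  rw [ha', hb', h1', h2', hDrec (2 * k + 3)]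
  have hB2 := hBne (2 * k + 1)
  have hB3 := hBne (2 * k + 2)
  have hB4 := hBne (2 * k + 3)
  have hB5 := hBne (2 * k + 4)
  field_simp
end

section
/- Let b_n be a sequence of nonzero complex numbers with c_1 ≤ |b_n| ≤ c_2 for positive constants c_1, c_2, and let a_n be nonzero complex numbers with |a_{2n+1}/a_{2n}| ≤ c_3 for all n. Let B_n satisfy the recurrence B_n = b_n B_{n-1} + a_n B_{n-2} (with B_{-1} = 0, B_0 = 1), and set r_n = B_n / B_{n-1} (assuming B_n ≠ 0 for all large n). Then it is impossible that simultaneously |r_{2n}| → ∞ and |r_{2n+1}| → 0 as n → ∞. -/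
/-!
From `B (n + 2) = b (n + 1) * B (n + 1) + a (n + 1) * B n` one gets
`r n * (r (n + 1) - b (n + 1)) = a (n + 1)`. Taking this at two consecutive indices
`2n + 1`, `2n + 2` and using `‖a (2n + 3)‖ ≤ c3 * ‖a (2n + 2)‖` gives
`c1 - ‖r (2n + 3)‖ ≤ c3 * ‖r (2n + 1)‖ * (1 + c2 / ‖r (2n + 2)‖)`.
If the even ratios blow up and the odd ones vanish, the left side tends to `c1 > 0`
and the right side to `0`.
-/

open Filter Topology

lemma ratio_mul_ratio_sub_eq {K : Type*} [Field K] {a b B r : ℕ → K}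
    (hB : ∀ n, B (n + 2) = b (n + 1) * B (n + 1) + a (n + 1) * B n)
    (hr : ∀ n, 1 ≤ n → r n = B (n + 1) / B n) {n : ℕ} (hn : 1 ≤ n)
    (h0 : B n ≠ 0) (h1 : B (n + 1) ≠ 0) :
    r n * (r (n + 1) - b (n + 1)) = a (n + 1) := by
  rw [hr n hn, hr (n + 1) (by omega), hB n]
  field_simp
  ring

lemma sub_norm_le_mul_one_add_div {𝕜 : Type*} [NormedField 𝕜] {x y w β β' : 𝕜}
    {c1 c2 c3 : ℝ} (h : ‖x * (y - β')‖ ≤ c3 * ‖w * (x - β)‖) (hc3 : 0 ≤ c3)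
    (hβ : ‖β‖ ≤ c2) (hβ' : c1 ≤ ‖β'‖) (hx : x ≠ 0) :
    c1 - ‖y‖ ≤ c3 * ‖w‖ * (1 + c2 / ‖x‖) := by
  have hx' : 0 < ‖x‖ := norm_pos_iff.mpr hx
  calc c1 - ‖y‖ ≤ ‖y - β'‖ := by linarith [norm_sub_norm_le β' y, norm_sub_rev y β']
    _ = ‖x * (y - β')‖ / ‖x‖ := by rw [norm_mul, mul_div_cancel_left₀ _ hx'.ne']
    _ ≤ c3 * ‖w * (x - β)‖ / ‖x‖ := by gcongr
    _ ≤ c3 * ‖w‖ * (‖x‖ + c2) / ‖x‖ := by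
        rw [norm_mul, ← mul_assoc]
        gcongr
        exact (norm_sub_le x β).trans (by linarith)
    _ = c3 * ‖w‖ * (1 + c2 / ‖x‖) := by field_simp

theorem not_ratio_even_atTop_and_odd_zero_general
    (a b B r : ℕ → ℂ) (c1 c2 c3 : ℝ)
    (hc1 : 0 < c1) (hc3 : 0 < c3)
    (hane : ∀ n, 1 ≤ n → a n ≠ 0)
    (hb : ∀ n, 1 ≤ n → c1 ≤ ‖b n‖ ∧ ‖b n‖ ≤ c2)
    (hratio : ∀ n, 1 ≤ n → ‖a (2 * n + 1) / a (2 * n)‖ ≤ c3)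
    (hB : ∀ n, B (n + 2) = b (n + 1) * B (n + 1) + a (n + 1) * B n)
    (hBne : ∃ N, ∀ n, N ≤ n → B n ≠ 0)
    (hr : ∀ n, 1 ≤ n → r n = B (n + 1) / B n) :
    ¬ (Tendsto (fun n => ‖r (2 * n)‖) atTop atTop ∧
        Tendsto (fun n => ‖r (2 * n + 1)‖) atTop (𝓝 0)) := by
  rintro ⟨heven, hodd⟩
  obtain ⟨N, hN⟩ := hBne
  have heven' := heven.comp (tendsto_add_atTop_nat 1)
  have hstep : ∀ᶠ n in atTop, c1 - ‖r (2 * (n + 1) + 1)‖ ≤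
      c3 * ‖r (2 * n + 1)‖ * (1 + c2 / ‖r (2 * (n + 1))‖) := by
    filter_upwards [eventually_ge_atTop N, heven'.eventually_gt_atTop 0] with n hn hpos
    have hodd_id := ratio_mul_ratio_sub_eq hB hr (n := 2 * n + 1) (by omega)
      (hN (2 * n + 1) (by omega)) (hN (2 * n + 1 + 1) (by omega))
    have heven_id := ratio_mul_ratio_sub_eq hB hr (n := 2 * (n + 1)) (by omega)
      (hN (2 * (n + 1)) (by omega)) (hN (2 * (n + 1) + 1) (by omega))
    have ha : ‖a (2 * (n + 1) + 1)‖ ≤ c3 * ‖a (2 * (n + 1))‖ := by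
      have h := hratio (n + 1) (by omega)
      rwa [norm_div, div_le_iff₀ (norm_pos_iff.mpr (hane _ (by omega)))] at h
    rw [show 2 * n + 1 + 1 = 2 * (n + 1) by ring] at hodd_id
    refine sub_norm_le_mul_one_add_div ?_ hc3.le (hb (2 * (n + 1)) (by omega)).2
      (hb (2 * (n + 1) + 1) (by omega)).1 (norm_pos_iff.mp hpos)
    rwa [heven_id, hodd_id]
  have hleft : Tendsto (fun n => c1 - ‖r (2 * (n + 1) + 1)‖) atTop (𝓝 (c1 - 0)) :=
    tendsto_const_nhds.sub (hodd.comp (tendsto_add_atTop_nat 1))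
  have hright : Tendsto (fun n => c3 * ‖r (2 * n + 1)‖ * (1 + c2 / ‖r (2 * (n + 1))‖))
      atTop (𝓝 (c3 * 0 * (1 + 0))) :=
    (tendsto_const_nhds.mul hodd).mul
      (tendsto_const_nhds.add (tendsto_const_nhds.div_atTop heven'))
  have hc1_nonpos := le_of_tendsto_of_tendsto hleft hright hstep
  norm_num at hc1_nonpos
  linarith

/-- Key technical step of the general-divergence theorem.  Let `b n` be nonzero
complex numbers with `c1 ≤ |b n| ≤ c2` (for `n ≥ 1`), `a n` nonzero with
`|a_{2n+1}/a_{2n}| ≤ c3`, and let `B` satisfy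
`B n = b n * B (n-1) + a n * B (n-2)` with `B₋₁ = 0`, `B₀ = 1`
(indexing: `B (n+1)` corresponds to subscript `n`), with `B n ≠ 0` for all large
`n`, and `r n = B n / B (n-1)` (so `r (n+1) = B (n+2)/B (n+1)` here, `r`'s
subscript `n` being index `n`, defined for `n ≥ 1`).  Then one cannot have
simultaneously `|r (2n)| → ∞` and `|r (2n+1)| → 0`. -/
theorem not_ratio_even_atTop_and_odd_zero
    (a b B r : ℕ → ℂ) (c1 c2 c3 : ℝ)
    (hc1 : 0 < c1) (hc2 : 0 < c2) (hc3 : 0 < c3)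
    (hbne : ∀ n, 1 ≤ n → b n ≠ 0)
    (hane : ∀ n, 1 ≤ n → a n ≠ 0)
    (hb : ∀ n, 1 ≤ n → c1 ≤ ‖b n‖ ∧ ‖b n‖ ≤ c2)
    (hratio : ∀ n, 1 ≤ n → ‖a (2 * n + 1) / a (2 * n)‖ ≤ c3)
    (hB0 : B 0 = 0) (hB1 : B 1 = 1)
    (hB : ∀ n, B (n + 2) = b (n + 1) * B (n + 1) + a (n + 1) * B n)
    (hBne : ∃ N, ∀ n, N ≤ n → B n ≠ 0)
    (hr : ∀ n, 1 ≤ n → r n = B (n + 1) / B n) :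
    ¬ (Tendsto (fun n => ‖r (2 * n)‖) atTop atTop ∧
        Tendsto (fun n => ‖r (2 * n + 1)‖) atTop (𝓝 0)) :=
  not_ratio_even_atTop_and_odd_zero_general a b B r c1 c2 c3 hc1 hc3 hane hb hratio hB hBne hr
end

section
/- Let C = b_0 + K_{n=1}^∞ a_n/b_n be a continued fraction whose odd part converges to f_1 and whose even part converges to f_2 with f_1 ≠ f_2. Suppose there are positive constants c_1, c_2, c_3 such that c_1 ≤ |b_i| ≤ c_2 and |a_{2i+1}/a_{2i}| ≤ c_3 for all i ≥ 1. Then C does not converge generally: there do not exist f ∈ ℂ ∪ {∞} and sequences {v_n}, {w_n} in ℂ ∪ {∞} with liminf_n d(v_n, w_n) > 0 such that S_n(v_n) → f and S_n(w_n) → f, where d is the chordal metric and S_n(w) = (A_n + w A_{n-1})/(B_n + w B_{n-1}). -/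
open Filter Topology

/-!
In homogeneous coordinates the chordal distance is `|det (p, q)| / (‖p‖ * ‖q‖)`, and
`S n = modApprox A B n` is the Möbius map of the matrix `T n` with columns `(A n, B n)` and
`(A (n+1), B (n+1))`. Since `T n` contracts chordal distances by at most the factor
`ρ n = |det T n| / ‖T n‖²` (Frobenius norm), general convergence forces `ρ n → 0`.

On the other hand, the odd and even approximants have different limits, so along one parity
class the points `A k / B k`, which are `S n (∞)` for `k = n` and `S n (0)` for `k = n + 1`,
stay a fixed distance away from `f`. One of `v n`, `w n` is far from the direction that
`T n` contracts most, and then `S n` of it lies near `f`, which is only possible if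
`|det T n| ≳ ‖(A k, B k)‖ * ‖T n‖`. Chaining this for `k = n` and `k = n + 2` through the
recurrence, `|b (n+1)| ≥ c1` and `|det T (n+1)| = |a (n+1)| * |det T n|` gives
`ρ (n+1) ≥ const > 0` infinitely often.
-/

/-- The chordal metric on the Riemann sphere `ℂ ∪ {∞}`, modelled as `Option ℂ`
with `none = ∞`. -/
noncomputable def chordal : Option ℂ → Option ℂ → ℝ
  | some w, some z =>
      ‖z - w‖ /
        (Real.sqrt (1 + ‖w‖ ^ 2) * Real.sqrt (1 + ‖z‖ ^ 2))
  | some w, none => 1 / Real.sqrt (1 + ‖w‖ ^ 2)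
  | none, some z => 1 / Real.sqrt (1 + ‖z‖ ^ 2)
  | none, none => 0

/-- The modified approximant `S_n(w) = (A_n + w A_{n-1})/(B_n + w B_{n-1})`, as a
map of the Riemann sphere `Option ℂ`; `A`, `B` are indexed so that `A (n+1)`,
`B (n+1)` correspond to subscript `n`.  `S_n(∞) = A_{n-1}/B_{n-1}`. -/
noncomputable def modApprox (A B : ℕ → ℂ) (n : ℕ) : Option ℂ → Option ℂ
  | some w =>
      if B (n + 1) + w * B n = 0 then none
      else some ((A (n + 1) + w * A n) / (B (n + 1) + w * B n))
  | none => if B n = 0 then none else some (A n / B n)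

local notation "ℂ²" => EuclideanSpace ℂ (Fin 2)

namespace RiemannSphere

lemma norm_eq_sqrt (p : ℂ²) : ‖p‖ = √(‖p 0‖ ^ 2 + ‖p 1‖ ^ 2) := by
  simp [EuclideanSpace.norm_eq, Fin.sum_univ_two]

lemma add_mul_le_sqrt_mul_sqrt (a b c d : ℝ) :
    a * c + b * d ≤ √(a ^ 2 + b ^ 2) * √(c ^ 2 + d ^ 2) := by
  simpa [Fin.sum_univ_two] using Real.sum_mul_le_sqrt_mul_sqrt Finset.univ ![a, b] ![c, d]

def det2 (p q : ℂ²) : ℂ := p 0 * q 1 - p 1 * q 0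

lemma det2_comm (p q : ℂ²) : det2 q p = - det2 p q := by unfold det2; ring

lemma norm_det2_le (p q : ℂ²) : ‖det2 p q‖ ≤ ‖p‖ * ‖q‖ := calc
  ‖det2 p q‖ ≤ ‖p 0‖ * ‖q 1‖ + ‖p 1‖ * ‖q 0‖ := by
    unfold det2; simpa only [norm_mul] using norm_sub_le (p 0 * q 1) (p 1 * q 0)
  _ ≤ ‖p‖ * ‖q‖ := by
    rw [norm_eq_sqrt p, norm_eq_sqrt q, add_comm (‖q 0‖ ^ 2)]
    exact add_mul_le_sqrt_mul_sqrt _ _ _ _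

lemma det2_smul_left (c : ℂ) (p q : ℂ²) : det2 (c • p) q = c * det2 p q := by
  simp only [det2, PiLp.smul_apply, smul_eq_mul]; ring

noncomputable def projDist (p q : ℂ²) : ℝ := ‖det2 p q‖ / (‖p‖ * ‖q‖)

lemma projDist_comm (p q : ℂ²) : projDist q p = projDist p q := by
  rw [projDist, det2_comm, norm_neg, mul_comm, projDist]

lemma projDist_smul_left {c : ℂ} (hc : c ≠ 0) (p q : ℂ²) :
    projDist (c • p) q = projDist p q := by
  rw [projDist, projDist, det2_smul_left, norm_smul, norm_mul, mul_assoc,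
    mul_div_mul_left _ _ (norm_ne_zero_iff.2 hc)]

lemma projDist_le_one (p q : ℂ²) : projDist p q ≤ 1 :=
  div_le_one_of_le₀ (norm_det2_le p q) (by positivity)

lemma projDist_triangle {p q r : ℂ²} (hq : q ≠ 0) :
    projDist p r ≤ projDist p q + projDist q r := by
  rcases eq_or_ne p 0 with rfl | hp
  · simp only [projDist, det2, PiLp.zero_apply, zero_mul, sub_zero, norm_zero, zero_div]
    positivity
  rcases eq_or_ne r 0 with rfl | hr
  · simp only [projDist, det2, PiLp.zero_apply, mul_zero, sub_zero, norm_zero, zero_div]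
    positivity
  have key : ‖det2 p r‖ * ‖q‖ ≤ ‖det2 p q‖ * ‖r‖ + ‖det2 q r‖ * ‖p‖ := by
    have hid : det2 p r • q = det2 p q • r + det2 q r • p := by
      ext i; fin_cases i <;> simp [det2] <;> ring
    calc ‖det2 p r‖ * ‖q‖ = ‖det2 p q • r + det2 q r • p‖ := by rw [← hid, norm_smul]
      _ ≤ _ := by simpa only [norm_smul] using norm_add_le (det2 p q • r) (det2 q r • p)
  have hp' := norm_pos_iff.2 hp
  have hq' := norm_pos_iff.2 hq
  have hr' := norm_pos_iff.2 hr
  rw [projDist, projDist, projDist, div_add_div _ _ (by positivity) (by positivity),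
    div_le_div_iff₀ (by positivity) (by positivity)]
  nlinarith [mul_le_mul_of_nonneg_left key (mul_pos hp' hr').le]

def homog : Option ℂ → ℂ²
  | some z => !₂[z, 1]
  | none => !₂[1, 0]

lemma homog_ne_zero (x : Option ℂ) : homog x ≠ 0 := by
  intro h
  cases x
  · simpa [homog] using congrArg (· 0) h
  · simpa [homog] using congrArg (· 1) h

noncomputable def ofHomog (p : ℂ²) : Option ℂ := if p 1 = 0 then none else some (p 0 / p 1)

lemma exists_homog_ofHomog_eq_smul {p : ℂ²} (hp : p ≠ 0) :
    ∃ c : ℂ, c ≠ 0 ∧ homog (ofHomog p) = c • p := by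
  by_cases h1 : p 1 = 0
  · have h0 : p 0 ≠ 0 := fun h0 => hp (by ext i; fin_cases i <;> simp [h0, h1])
    refine ⟨(p 0)⁻¹, inv_ne_zero h0, ?_⟩
    ext i; fin_cases i <;> simp [ofHomog, homog, h0, h1]
  · refine ⟨(p 1)⁻¹, inv_ne_zero h1, ?_⟩
    ext i; fin_cases i <;> simp [ofHomog, homog, h1, div_eq_inv_mul]

lemma chordal_eq_projDist (x y : Option ℂ) : chordal x y = projDist (homog x) (homog y) := by
  cases x <;> cases y <;>
    simp [chordal, projDist, homog, det2, norm_eq_sqrt, norm_sub_rev, add_comm]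

lemma chordal_ofHomog {p q : ℂ²} (hp : p ≠ 0) (hq : q ≠ 0) :
    chordal (ofHomog p) (ofHomog q) = projDist p q := by
  obtain ⟨c, hc, hcp⟩ := exists_homog_ofHomog_eq_smul hp
  obtain ⟨d, hd, hdq⟩ := exists_homog_ofHomog_eq_smul hq
  rw [chordal_eq_projDist, hcp, hdq, projDist_smul_left hc, projDist_comm,
    projDist_smul_left hd, projDist_comm]

lemma chordal_nonneg (x y : Option ℂ) : 0 ≤ chordal x y := by
  rw [chordal_eq_projDist]; unfold projDist; positivity

lemma chordal_comm (x y : Option ℂ) : chordal y x = chordal x y := by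
  rw [chordal_eq_projDist, chordal_eq_projDist, projDist_comm]

lemma chordal_triangle (x y z : Option ℂ) : chordal x z ≤ chordal x y + chordal y z := by
  simp only [chordal_eq_projDist]
  exact projDist_triangle (homog_ne_zero y)

lemma continuous_chordal_some (f : Option ℂ) : Continuous fun z : ℂ => chordal (some z) f := by
  cases f with
  | none => exact continuous_const.div (by fun_prop) fun z => by positivity
  | some c => exact Continuous.div (by fun_prop) (by fun_prop) fun z => by positivity

lemma chordal_pos {x y : Option ℂ} (h : x ≠ y) : 0 < chordal x y := by
  cases x <;> cases y
  · exact absurd rfl h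
  all_goals simp only [chordal]; try positivity
  exact div_pos (norm_pos_iff.2 (sub_ne_zero.2 fun e => h (by rw [e]))) (by positivity)

lemma exists_eventually_le_chordal_ofHomog {p : ℕ → ℂ²} {g : ℂ} {f : Option ℂ}
    (hp : Tendsto (fun n => p n 0 / p n 1) atTop (𝓝 g)) (hfg : f ≠ some g)
    (hnone : f = none → ∀ᶠ n in atTop, p n 1 ≠ 0) :
    ∃ δ > 0, ∀ᶠ n in atTop, δ ≤ chordal (ofHomog (p n)) f := by
  have hpos := chordal_pos (Ne.symm hfg)
  have hev : ∀ᶠ n in atTop, chordal (some g) f / 2 < chordal (some (p n 0 / p n 1)) f :=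
    ((continuous_chordal_some f).tendsto g |>.comp hp).eventually (lt_mem_nhds (half_lt_self hpos))
  cases f with
  | none =>
    refine ⟨_, half_pos hpos, ?_⟩
    filter_upwards [hev, hnone rfl] with n h1 h2
    rw [ofHomog, if_neg h2]
    exact h1.le
  | some c =>
    refine ⟨min (chordal (some g) (some c) / 2) (chordal none (some c)),
      lt_min (half_pos hpos) (chordal_pos (Option.some_ne_none c).symm), ?_⟩
    filter_upwards [hev] with n h1
    unfold ofHomog
    split_ifs
    · exact min_le_right _ _
    · exact (min_le_left _ _).trans h1.le

section Mobius

variable (u v : ℂ²)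

def lin (p : ℂ²) : ℂ² := p 0 • u + p 1 • v

noncomputable def mobius (x : Option ℂ) : Option ℂ := ofHomog (lin u v (homog x))

noncomputable def detRatio : ℝ := ‖det2 u v‖ / (‖u‖ ^ 2 + ‖v‖ ^ 2)

lemma lin_homog_none : lin u v (homog none) = u := by simp [lin, homog]

lemma lin_homog_some_zero : lin u v (homog (some 0)) = v := by simp [lin, homog]

lemma mobius_none : mobius u v none = ofHomog u := by rw [mobius, lin_homog_none]

lemma mobius_some_zero : mobius u v (some 0) = ofHomog v := by rw [mobius, lin_homog_some_zero]

lemma norm_homog_none : ‖homog none‖ = 1 := by simp [homog, norm_eq_sqrt]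

lemma norm_homog_some_zero : ‖homog (some 0)‖ = 1 := by simp [homog, norm_eq_sqrt]

variable {u v}

lemma det2_lin (p q : ℂ²) : det2 (lin u v p) (lin u v q) = det2 p q * det2 u v := by
  simp only [det2, lin, PiLp.add_apply, PiLp.smul_apply, smul_eq_mul]; ring

lemma lin_ne_zero (h : det2 u v ≠ 0) {p : ℂ²} (hp : p ≠ 0) : lin u v p ≠ 0 := by
  intro hl
  have h0 : det2 (lin u v p) v = p 0 * det2 u v := by
    simp only [det2, lin, PiLp.add_apply, PiLp.smul_apply, smul_eq_mul]; ring
  have h1 : det2 u (lin u v p) = p 1 * det2 u v := by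
    simp only [det2, lin, PiLp.add_apply, PiLp.smul_apply, smul_eq_mul]; ring
  simp only [hl, det2, PiLp.zero_apply, zero_mul, mul_zero, sub_zero] at h0 h1
  refine hp ?_
  ext i
  fin_cases i
  · simpa using (mul_eq_zero.1 h0.symm).resolve_right h
  · simpa using (mul_eq_zero.1 h1.symm).resolve_right h

lemma norm_lin_le (p : ℂ²) : ‖lin u v p‖ ≤ √(‖u‖ ^ 2 + ‖v‖ ^ 2) * ‖p‖ := calc
  ‖lin u v p‖ ≤ ‖p 0‖ * ‖u‖ + ‖p 1‖ * ‖v‖ := by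
    simpa only [lin, norm_smul] using norm_add_le (p 0 • u) (p 1 • v)
  _ ≤ √(‖u‖ ^ 2 + ‖v‖ ^ 2) * ‖p‖ := by
    rw [norm_eq_sqrt p, mul_comm ‖p 0‖, mul_comm ‖p 1‖]; exact add_mul_le_sqrt_mul_sqrt _ _ _ _

lemma chordal_mobius_mul (h : det2 u v ≠ 0) (x y : Option ℂ) :
    chordal (mobius u v x) (mobius u v y) * (‖lin u v (homog x)‖ * ‖lin u v (homog y)‖)
      = ‖det2 u v‖ * (chordal x y * (‖homog x‖ * ‖homog y‖)) := by
  have hx := lin_ne_zero h (homog_ne_zero x)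
  have hy := lin_ne_zero h (homog_ne_zero y)
  have hx' := homog_ne_zero x
  have hy' := homog_ne_zero y
  rw [mobius, mobius, chordal_ofHomog hx hy, chordal_eq_projDist, projDist, projDist, det2_lin,
    norm_mul]
  field_simp

lemma mul_chordal_le_chordal_mobius (x y : Option ℂ) :
    ‖det2 u v‖ * chordal x y ≤ (‖u‖ ^ 2 + ‖v‖ ^ 2) * chordal (mobius u v x) (mobius u v y) := by
  rcases eq_or_ne (det2 u v) 0 with h | h
  · rw [h, norm_zero, zero_mul]; exact mul_nonneg (by positivity) (chordal_nonneg _ _)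
  have hx := norm_lin_le (u := u) (v := v) (homog x)
  have hy := norm_lin_le (u := u) (v := v) (homog y)
  have hx' := norm_pos_iff.2 (homog_ne_zero x)
  have hy' := norm_pos_iff.2 (homog_ne_zero y)
  have hF : √(‖u‖ ^ 2 + ‖v‖ ^ 2) ^ 2 = ‖u‖ ^ 2 + ‖v‖ ^ 2 := Real.sq_sqrt (by positivity)
  have hc := chordal_nonneg (mobius u v x) (mobius u v y)
  refine le_of_mul_le_mul_right ?_ (mul_pos hx' hy')
  calc ‖det2 u v‖ * chordal x y * (‖homog x‖ * ‖homog y‖)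
      = chordal (mobius u v x) (mobius u v y) * (‖lin u v (homog x)‖ * ‖lin u v (homog y)‖) := by
        rw [chordal_mobius_mul h]; ring
    _ ≤ chordal (mobius u v x) (mobius u v y) *
        ((√(‖u‖ ^ 2 + ‖v‖ ^ 2) * ‖homog x‖) * (√(‖u‖ ^ 2 + ‖v‖ ^ 2) * ‖homog y‖)) := by
        gcongr
    _ = _ := by
        linear_combination chordal (mobius u v x) (mobius u v y) * ‖homog x‖ * ‖homog y‖ * hF

lemma tendsto_detRatio_zero {U V : ℕ → ℂ²} {v w : ℕ → Option ℂ} {f : Option ℂ} {M : ℝ}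
    (hM : 0 < M) (hvw : ∀ᶠ n in atTop, M ≤ chordal (v n) (w n))
    (hv : Tendsto (fun n => chordal (mobius (U n) (V n) (v n)) f) atTop (𝓝 0))
    (hw : Tendsto (fun n => chordal (mobius (U n) (V n) (w n)) f) atTop (𝓝 0)) :
    Tendsto (fun n => detRatio (U n) (V n)) atTop (𝓝 0) := by
  have hlim : Tendsto (fun n => (chordal (mobius (U n) (V n) (v n)) f
      + chordal (mobius (U n) (V n) (w n)) f) / M) atTop (𝓝 0) := by
    simpa using (hv.add hw).div_const M
  refine squeeze_zero' (.of_forall fun n => by unfold detRatio; positivity) ?_ hlim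
  filter_upwards [hvw] with n hn
  have h := mul_chordal_le_chordal_mobius (u := U n) (v := V n) (v n) (w n)
  have htri := chordal_triangle (mobius (U n) (V n) (v n)) f (mobius (U n) (V n) (w n))
  rw [chordal_comm (mobius (U n) (V n) (w n)) f] at htri
  refine div_le_of_le_mul₀ (by positivity)
    (div_nonneg (add_nonneg (chordal_nonneg _ _) (chordal_nonneg _ _)) hM.le) ?_
  rw [div_mul_eq_mul_div, le_div_iff₀ hM]
  have hF : 0 ≤ ‖U n‖ ^ 2 + ‖V n‖ ^ 2 := by positivity
  nlinarith [mul_le_mul_of_nonneg_left htri hF,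
    mul_le_mul_of_nonneg_left hn (norm_nonneg (det2 (U n) (V n)))]

/-- `e` is a column of the adjugate of the matrix, so its image is `(det, 0)` or `(0, det)`. -/
lemma exists_norm_lin_eq_norm_det2 :
    ∃ e : ℂ², ‖u‖ ^ 2 + ‖v‖ ^ 2 ≤ 2 * ‖e‖ ^ 2 ∧ ‖lin u v e‖ = ‖det2 u v‖ := by
  have h₁ : lin u v !₂[v 1, -u 1] = !₂[det2 u v, 0] := by
    ext i; fin_cases i <;> simp [lin, det2] <;> ring
  have h₂ : lin u v !₂[-v 0, u 0] = !₂[0, det2 u v] := by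
    ext i; fin_cases i <;> simp [lin, det2] <;> ring
  have hsum : ‖u‖ ^ 2 + ‖v‖ ^ 2 = ‖(!₂[v 1, -u 1] : ℂ²)‖ ^ 2 + ‖(!₂[-v 0, u 0] : ℂ²)‖ ^ 2 := by
    simp only [EuclideanSpace.norm_sq_eq, Fin.sum_univ_two]; simp; ring
  by_cases h : ‖u‖ ^ 2 + ‖v‖ ^ 2 ≤ 2 * ‖(!₂[v 1, -u 1] : ℂ²)‖ ^ 2
  · exact ⟨_, h, by rw [h₁, norm_eq_sqrt]; simp⟩
  · exact ⟨_, by linarith, by rw [h₂, norm_eq_sqrt]; simp⟩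

lemma norm_det2_le_norm_lin (h : det2 u v ≠ 0) {e : ℂ²} (he : ‖lin u v e‖ = ‖det2 u v‖)
    (p : ℂ²) : ‖det2 p e‖ ≤ ‖lin u v p‖ := by
  have := norm_det2_le (lin u v p) (lin u v e)
  rw [det2_lin, norm_mul, he] at this
  exact le_of_mul_le_mul_right this (norm_pos_iff.2 h)

/-- One of `x`, `y` is far from the direction `e` that the matrix contracts most, so its image
is long; as its image under `mobius` is close to `f` while that of `z` is not, the determinant
cannot be small. -/
lemma mul_le_det2_of_chordal_le {x y z f : Option ℂ} {M δ : ℝ} (h : det2 u v ≠ 0) (hM : 0 ≤ M)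
    (hxy : M ≤ chordal x y) (hε : chordal (mobius u v x) f + chordal (mobius u v y) f ≤ δ / 2)
    (hz : δ ≤ chordal (mobius u v z) f) :
    M * δ * ‖lin u v (homog z)‖ * √(‖u‖ ^ 2 + ‖v‖ ^ 2) ≤ 8 * ‖det2 u v‖ * ‖homog z‖ := by
  obtain ⟨e, heF, he⟩ := exists_norm_lin_eq_norm_det2 (u := u) (v := v)
  have he0 : e ≠ 0 := by
    rintro rfl
    simp only [lin, PiLp.zero_apply, zero_smul, add_zero, norm_zero] at he
    exact h (norm_eq_zero.1 he.symm)
  obtain ⟨p, hpe, hpf⟩ :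
      ∃ p, M / 2 ≤ projDist (homog p) e ∧ chordal (mobius u v p) f ≤ δ / 2 := by
    by_cases hx : M / 2 ≤ projDist (homog x) e
    · exact ⟨x, hx, by linarith [chordal_nonneg (mobius u v y) f]⟩
    · refine ⟨y, ?_, by linarith [chordal_nonneg (mobius u v x) f]⟩
      have := projDist_triangle (p := homog x) (r := homog y) he0
      rw [← chordal_eq_projDist, projDist_comm (homog y) e] at this
      linarith
  have hp := norm_pos_iff.2 (homog_ne_zero p)
  have heF' : √(‖u‖ ^ 2 + ‖v‖ ^ 2) ≤ 2 * ‖e‖ :=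
    Real.sqrt_le_iff.2 ⟨by positivity, by nlinarith⟩
  have hlow : M / 2 * (‖homog p‖ * (√(‖u‖ ^ 2 + ‖v‖ ^ 2) / 2)) ≤ ‖lin u v (homog p)‖ := calc
    _ ≤ projDist (homog p) e * (‖homog p‖ * ‖e‖) := by gcongr <;> linarith
    _ = ‖det2 (homog p) e‖ := by
        rw [projDist, div_mul_cancel₀ _ (mul_pos hp (norm_pos_iff.2 he0)).ne']
    _ ≤ _ := norm_det2_le_norm_lin h he _
  have hfar : δ / 2 ≤ chordal (mobius u v z) (mobius u v p) := by
    linarith [chordal_triangle (mobius u v z) (mobius u v p) f, chordal_comm f (mobius u v p)]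
  have hzp : chordal z p ≤ 1 := by rw [chordal_eq_projDist]; exact projDist_le_one _ _
  have hδ : 0 ≤ δ := by
    linarith [chordal_nonneg (mobius u v x) f, chordal_nonneg (mobius u v y) f]
  refine le_of_mul_le_mul_right ?_ hp
  calc M * δ * ‖lin u v (homog z)‖ * √(‖u‖ ^ 2 + ‖v‖ ^ 2) * ‖homog p‖
      = 8 * (δ / 2 * ‖lin u v (homog z)‖ *
          (M / 2 * (‖homog p‖ * (√(‖u‖ ^ 2 + ‖v‖ ^ 2) / 2)))) := by ring
    _ ≤ 8 * (chordal (mobius u v z) (mobius u v p) * ‖lin u v (homog z)‖ *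
          ‖lin u v (homog p)‖) := by
        gcongr
        exact mul_nonneg (chordal_nonneg _ _) (norm_nonneg _)
    _ = 8 * (‖det2 u v‖ * (chordal z p * (‖homog z‖ * ‖homog p‖))) := by
        rw [← chordal_mobius_mul h]; ring
    _ ≤ 8 * (‖det2 u v‖ * (1 * (‖homog z‖ * ‖homog p‖))) := by gcongr
    _ = 8 * ‖det2 u v‖ * ‖homog z‖ * ‖homog p‖ := by ring

end Mobius

end RiemannSphere

open RiemannSphere

namespace ContinuedFraction

/-- Used with `Rᵢ = ‖col A B (n + i)‖`, `Dᵢ = ‖det2 (col A B (n + i)) (col A B (n + i + 1))‖`,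
`α = ‖a (n + 1)‖` and `K = M * δ`. -/
lemma frobSq_le_of_chain {K c α R₀ R₁ R₂ D₀ D₁ : ℝ} (hK : 0 < K) (hc : 0 < c) (hα : 0 ≤ α)
    (hR₀ : 0 ≤ R₀) (hR₁ : 0 < R₁) (hR₂ : 0 ≤ R₂)
    (h₀ : K * R₀ * √(R₀ ^ 2 + R₁ ^ 2) ≤ 8 * D₀) (h₂ : K * R₂ * √(R₁ ^ 2 + R₂ ^ 2) ≤ 8 * D₁)
    (hD : D₁ = α * D₀) (hD₁ : D₁ ≤ R₁ * R₂) (hrec : c * R₁ ≤ R₂ + α * R₀) :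
    K ^ 2 * c * (R₁ ^ 2 + R₂ ^ 2) ≤ 8 * (K + 8 + K * c) * D₁ := by
  have hs₀ : R₁ ≤ √(R₀ ^ 2 + R₁ ^ 2) := Real.le_sqrt_of_sq_le (by nlinarith)
  have hs₁ : √(R₁ ^ 2 + R₂ ^ 2) ≤ R₁ + R₂ := Real.sqrt_le_iff.2 ⟨by positivity, by nlinarith⟩
  have hsq : √(R₁ ^ 2 + R₂ ^ 2) ^ 2 = R₁ ^ 2 + R₂ ^ 2 := Real.sq_sqrt (by positivity)
  have a₁ : K * R₀ * R₁ ≤ 8 * D₀ := le_trans (by gcongr) h₀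
  have a₂ : K * α * R₀ ≤ 8 * R₂ := by
    refine le_of_mul_le_mul_right ?_ hR₁
    nlinarith [mul_le_mul_of_nonneg_left a₁ hα]
  have a₃ : K * c * √(R₁ ^ 2 + R₂ ^ 2) ≤ (K + 8 + K * c) * R₂ := by
    nlinarith [mul_le_mul_of_nonneg_left hs₁ (mul_pos hK hc).le]
  have hs := Real.sqrt_nonneg (R₁ ^ 2 + R₂ ^ 2)
  calc K ^ 2 * c * (R₁ ^ 2 + R₂ ^ 2)
      = K * (K * c * √(R₁ ^ 2 + R₂ ^ 2)) * √(R₁ ^ 2 + R₂ ^ 2) := by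
        linear_combination (-(K ^ 2 * c)) * hsq
    _ ≤ K * ((K + 8 + K * c) * R₂) * √(R₁ ^ 2 + R₂ ^ 2) := by gcongr
    _ = (K + 8 + K * c) * (K * R₂ * √(R₁ ^ 2 + R₂ ^ 2)) := by ring
    _ ≤ (K + 8 + K * c) * (8 * D₁) := by gcongr
    _ = 8 * (K + 8 + K * c) * D₁ := by ring

variable {a b A B : ℕ → ℂ}

def col (A B : ℕ → ℂ) (k : ℕ) : ℂ² := !₂[A k, B k]

lemma modApprox_eq_mobius (A B : ℕ → ℂ) (n : ℕ) :
    modApprox A B n = mobius (col A B n) (col A B (n + 1)) := by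
  funext x
  cases x <;> simp [modApprox, mobius, ofHomog, lin, homog, col, add_comm]

lemma col_add_two (hA : ∀ n, A (n + 2) = b (n + 1) * A (n + 1) + a (n + 1) * A n)
    (hB : ∀ n, B (n + 2) = b (n + 1) * B (n + 1) + a (n + 1) * B n) (n : ℕ) :
    col A B (n + 2) = b (n + 1) • col A B (n + 1) + a (n + 1) • col A B n := by
  ext i; fin_cases i <;> simp [col, hA, hB]

lemma det2_col_add_one (hA : ∀ n, A (n + 2) = b (n + 1) * A (n + 1) + a (n + 1) * A n)
    (hB : ∀ n, B (n + 2) = b (n + 1) * B (n + 1) + a (n + 1) * B n) (n : ℕ) :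
    det2 (col A B (n + 1)) (col A B (n + 2))
      = -a (n + 1) * det2 (col A B n) (col A B (n + 1)) := by
  rw [col_add_two hA hB]
  simp only [det2, PiLp.add_apply, PiLp.smul_apply, smul_eq_mul]; ring

lemma det2_col_ne_zero (hA : ∀ n, A (n + 2) = b (n + 1) * A (n + 1) + a (n + 1) * A n)
    (hB : ∀ n, B (n + 2) = b (n + 1) * B (n + 1) + a (n + 1) * B n)
    (hane : ∀ i, 1 ≤ i → a i ≠ 0) (hA0 : A 0 = 1) (hB0 : B 0 = 0) (hB1 : B 1 = 1) (n : ℕ) :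
    det2 (col A B n) (col A B (n + 1)) ≠ 0 := by
  induction n with
  | zero => simp [det2, col, hA0, hB0, hB1]
  | succ n ih =>
    rw [det2_col_add_one hA hB]
    exact mul_ne_zero (neg_ne_zero.2 (hane _ n.succ_pos)) ih

lemma eq_zero_of_frequently_eq_zero {x y : ℕ → ℂ} {g : ℂ}
    (h : Tendsto (fun n => x n / y n) atTop (𝓝 g)) (hy : ∃ᶠ n in atTop, y n = 0) : g = 0 :=
  tendsto_nhds_unique_of_frequently_eq h tendsto_const_nhds (hy.mono fun n hn => by simp [hn])

lemma exists_parity_le_chordal {f₁ f₂ : ℂ}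
    (hodd : Tendsto (fun n => A (2 * n + 2) / B (2 * n + 2)) atTop (𝓝 f₁))
    (heven : Tendsto (fun n => A (2 * n + 1) / B (2 * n + 1)) atTop (𝓝 f₂))
    (hf : f₁ ≠ f₂) (f : Option ℂ) :
    ∃ δ > 0, ∃ e : ℕ, ∀ᶠ j in atTop, δ ≤ chordal (ofHomog (col A B (2 * j + e))) f ∧
      δ ≤ chordal (ofHomog (col A B (2 * j + e + 2))) f := by
  suffices ∃ δ > 0, ∃ e : ℕ, ∀ᶠ j in atTop, δ ≤ chordal (ofHomog (col A B (2 * j + e))) f by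
    obtain ⟨δ, hδ, e, h⟩ := this
    refine ⟨δ, hδ, e, ?_⟩
    filter_upwards [h, (tendsto_add_atTop_nat 1).eventually h] with j h₀ h₁
    exact ⟨h₀, by rwa [show 2 * (j + 1) + e = 2 * j + e + 2 by ring] at h₁⟩
  obtain ⟨g, e, hg, hfg, hnone⟩ : ∃ (g : ℂ) (e : ℕ),
      Tendsto (fun j => A (2 * j + e) / B (2 * j + e)) atTop (𝓝 g) ∧ f ≠ some g ∧
        (f = none → ∀ᶠ j in atTop, B (2 * j + e) ≠ 0) := by
    cases f with
    | none =>
      have : (∀ᶠ j in atTop, B (2 * j + 2) ≠ 0) ∨ ∀ᶠ j in atTop, B (2 * j + 1) ≠ 0 := by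
        by_contra! h
        exact hf ((eq_zero_of_frequently_eq_zero hodd h.1).trans
          (eq_zero_of_frequently_eq_zero heven h.2).symm)
      rcases this with h | h
      · exact ⟨f₁, 2, hodd, by simp, fun _ => h⟩
      · exact ⟨f₂, 1, heven, by simp, fun _ => h⟩
    | some c =>
      by_cases hc : c = f₁
      · exact ⟨f₂, 1, heven, by simpa [hc] using hf, by simp⟩
      · exact ⟨f₁, 2, hodd, by simpa using hc, by simp⟩
  obtain ⟨δ, hδ, h⟩ := exists_eventually_le_chordal_ofHomog (p := fun j => col A B (2 * j + e))
    (by simpa [col] using hg) hfg (by simpa [col] using hnone)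
  exact ⟨δ, hδ, e, h⟩

lemma eventually_le_detRatio {c₁ M δ : ℝ} {v w : ℕ → Option ℂ} {f : Option ℂ}
    (hA : ∀ n, A (n + 2) = b (n + 1) * A (n + 1) + a (n + 1) * A n)
    (hB : ∀ n, B (n + 2) = b (n + 1) * B (n + 1) + a (n + 1) * B n)
    (hb : ∀ i, 1 ≤ i → c₁ ≤ ‖b i‖) (hc₁ : 0 < c₁)
    (hdet : ∀ n, det2 (col A B n) (col A B (n + 1)) ≠ 0) (hM : 0 < M) (hδ : 0 < δ)
    (hvw : ∀ᶠ n in atTop, M ≤ chordal (v n) (w n))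
    (hε : Tendsto (fun n => chordal (modApprox A B n (v n)) f
      + chordal (modApprox A B n (w n)) f) atTop (𝓝 0)) :
    ∃ C > 0, ∀ᶠ n in atTop, δ ≤ chordal (ofHomog (col A B n)) f →
      δ ≤ chordal (ofHomog (col A B (n + 2))) f →
        C ≤ detRatio (col A B (n + 1)) (col A B (n + 2)) := by
  have hK : 0 < M * δ := mul_pos hM hδ
  refine ⟨(M * δ) ^ 2 * c₁ / (8 * (M * δ + 8 + M * δ * c₁)), by positivity, ?_⟩
  have hsmall := hvw.and (hε.eventually (ge_mem_nhds (half_pos hδ)))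
  filter_upwards [hsmall, (tendsto_add_atTop_nat 1).eventually hsmall]
    with n ⟨hvw₀, hε₀⟩ ⟨hvw₁, hε₁⟩ hg₀ hg₂
  simp only [modApprox_eq_mobius] at hε₀ hε₁
  have h₀ := mul_le_det2_of_chordal_le (z := none) (hdet n) hM.le hvw₀ hε₀
    (by rwa [mobius_none])
  have h₂ := mul_le_det2_of_chordal_le (z := some 0) (hdet (n + 1)) hM.le hvw₁ hε₁
    (by rwa [mobius_some_zero])
  rw [lin_homog_none, norm_homog_none, mul_one] at h₀
  rw [lin_homog_some_zero, norm_homog_some_zero, mul_one] at h₂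
  have hR₁ : 0 < ‖col A B (n + 1)‖ := norm_pos_iff.2 fun h0 => hdet n (by simp [h0, det2])
  have hrec : c₁ * ‖col A B (n + 1)‖ ≤ ‖col A B (n + 2)‖ + ‖a (n + 1)‖ * ‖col A B n‖ := calc
    c₁ * ‖col A B (n + 1)‖ ≤ ‖b (n + 1)‖ * ‖col A B (n + 1)‖ := by
        gcongr; exact hb _ n.succ_pos
    _ = ‖col A B (n + 2) - a (n + 1) • col A B n‖ := by
        rw [col_add_two hA hB, add_sub_cancel_right, norm_smul]
    _ ≤ _ := (norm_sub_le _ _).trans_eq (by rw [norm_smul])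
  have key := frobSq_le_of_chain hK hc₁ (norm_nonneg (a (n + 1))) (norm_nonneg _) hR₁
    (norm_nonneg _) h₀ h₂ (by rw [det2_col_add_one hA hB, norm_mul, norm_neg])
    (norm_det2_le _ _) hrec
  rw [detRatio, le_div_iff₀ (by positivity), div_mul_eq_mul_div, div_le_iff₀ (by positivity)]
  linarith

end ContinuedFraction

open ContinuedFraction

theorem general_divergence_general
    (a b A B : ℕ → ℂ) (f1 f2 : ℂ) (c1 c2 : ℝ)
    (hc1 : 0 < c1)
    (hane : ∀ i, 1 ≤ i → a i ≠ 0)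
    (hb : ∀ i, 1 ≤ i → c1 ≤ ‖b i‖ ∧ ‖b i‖ ≤ c2)
    (hA0 : A 0 = 1) (hB0 : B 0 = 0) (hB1 : B 1 = 1)
    (hA : ∀ n, A (n + 2) = b (n + 1) * A (n + 1) + a (n + 1) * A n)
    (hB : ∀ n, B (n + 2) = b (n + 1) * B (n + 1) + a (n + 1) * B n)
    (hodd : Tendsto (fun n => A (2 * n + 2) / B (2 * n + 2)) atTop (𝓝 f1))
    (heven : Tendsto (fun n => A (2 * n + 1) / B (2 * n + 1)) atTop (𝓝 f2))
    (hf : f1 ≠ f2) :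
    ¬ ∃ (f : Option ℂ) (v w : ℕ → Option ℂ),
        0 < Filter.liminf (fun n => chordal (v n) (w n)) atTop ∧
        Tendsto (fun n => chordal (modApprox A B n (v n)) f) atTop (𝓝 0) ∧
        Tendsto (fun n => chordal (modApprox A B n (w n)) f) atTop (𝓝 0) := by
  rintro ⟨f, v, w, hm, hv, hw⟩
  set M := Filter.liminf (fun n => chordal (v n) (w n)) atTop / 2
  have hvw : ∀ᶠ n in atTop, M ≤ chordal (v n) (w n) :=
    (eventually_lt_of_lt_liminf (half_lt_self hm)
      ⟨0, eventually_map.2 (.of_forall fun n => chordal_nonneg _ _)⟩).mono fun _ => le_of_lt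
  obtain ⟨δ, hδ, e, hgood⟩ := exists_parity_le_chordal hodd heven hf f
  obtain ⟨C, hC, hbound⟩ := eventually_le_detRatio hA hB (fun i hi => (hb i hi).1) hc1
    (det2_col_ne_zero hA hB hane hA0 hB0 hB1) (half_pos hm) hδ hvw (by simpa using hv.add hw)
  simp only [modApprox_eq_mobius] at hv hw
  have hsmall := (tendsto_detRatio_zero (half_pos hm) hvw hv hw).eventually (gt_mem_nhds hC)
  have hj : Tendsto (fun j => 2 * j + e) atTop atTop :=
    tendsto_atTop_mono (fun j => show j ≤ 2 * j + e by omega) tendsto_id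
  obtain ⟨j, hbd, hg, hsm⟩ := ((hj.eventually hbound).and
    (hgood.and (((tendsto_add_atTop_nat 1).comp hj).eventually hsmall))).exists
  exact (hbd hg.1 hg.2).not_gt hsm

/-- **Theorem on divergence in the general sense.**  Let
`C = b₀ + K_{n=1}^∞ a n / b n` be a continued fraction whose odd part converges
to `f1` and whose even part converges to `f2`, with `f1 ≠ f2`.  If there are
positive constants `c1, c2, c3` with `c1 ≤ |b i| ≤ c2` and
`|a (2i+1) / a (2i)| ≤ c3` for `i ≥ 1`, then `C` does not converge generally:
there are no `f` and sequences `v`, `w` on the Riemann sphere with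
`liminf d(v n, w n) > 0` and `S_n(v n) → f`, `S_n(w n) → f` in the chordal
metric. -/
theorem general_divergence
    (a b A B : ℕ → ℂ) (f1 f2 : ℂ) (c1 c2 c3 : ℝ)
    (hc1 : 0 < c1) (hc2 : 0 < c2) (hc3 : 0 < c3)
    (hane : ∀ i, 1 ≤ i → a i ≠ 0)
    (hb : ∀ i, 1 ≤ i → c1 ≤ ‖b i‖ ∧ ‖b i‖ ≤ c2)
    (hratio : ∀ i, 1 ≤ i → ‖a (2 * i + 1) / a (2 * i)‖ ≤ c3)
    (hA0 : A 0 = 1) (hA1 : A 1 = b 0) (hB0 : B 0 = 0) (hB1 : B 1 = 1)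
    (hA : ∀ n, A (n + 2) = b (n + 1) * A (n + 1) + a (n + 1) * A n)
    (hB : ∀ n, B (n + 2) = b (n + 1) * B (n + 1) + a (n + 1) * B n)
    (hodd : Tendsto (fun n => A (2 * n + 2) / B (2 * n + 2)) atTop (𝓝 f1))
    (heven : Tendsto (fun n => A (2 * n + 1) / B (2 * n + 1)) atTop (𝓝 f2))
    (hf : f1 ≠ f2) :
    ¬ ∃ (f : Option ℂ) (v w : ℕ → Option ℂ),
        0 < Filter.liminf (fun n => chordal (v n) (w n)) atTop ∧
        Tendsto (fun n => chordal (modApprox A B n (v n)) f) atTop (𝓝 0) ∧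
        Tendsto (fun n => chordal (modApprox A B n (w n)) f) atTop (𝓝 0) :=
  general_divergence_general a b A B f1 f2 c1 c2 hc1 hane hb hA0 hB0 hB1 hA hB hodd heven hf
end

section
/- Under the hypotheses of the general-divergence theorem (odd part of C converges to f_1, even part to f_2, f_1 ≠ f_2, bounds on |b_i| and |a_{2i+1}/a_{2i}|), if C converged generally to a finite value f with f ≠ f_1 and f ≠ f_2, witnessed by sequences v_n, w_n, then the sequences of even-indexed witnesses satisfy lim_{n→∞} d(v_{2n}, w_{2n}) = 0, contradicting liminf d(v_n, w_n) > 0. Hence any finite general limit must equal f_1 or f_2. -/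
open Filter Topology

lemma sqrt_norm_sq_add_norm_sq_pos {a b : ℂ} (h : ¬(a = 0 ∧ b = 0)) :
    0 < √(‖a‖ ^ 2 + ‖b‖ ^ 2) := by
  rcases not_and_or.1 h with ha | hb
  · have := norm_pos_iff.2 ha
    positivity
  · have := norm_pos_iff.2 hb
    positivity

lemma sqrt_norm_sq_add_norm_sq_eq {a b : ℂ} (hb : b ≠ 0) :
    √(‖a‖ ^ 2 + ‖b‖ ^ 2) = √(1 + ‖a / b‖ ^ 2) * ‖b‖ := by
  have hb' : 0 < ‖b‖ := norm_pos_iff.2 hb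
  rw [← Real.sqrt_sq hb'.le, ← Real.sqrt_mul (by positivity), Real.sqrt_sq hb'.le, norm_div]
  congr 1
  field_simp
  ring

lemma chordal_nonneg (o o' : Option ℂ) : 0 ≤ chordal o o' := by
  cases o <;> cases o' <;> (simp only [chordal]; positivity)

lemma chordal_some_div_some_div {a b a' b' : ℂ} (hb : b ≠ 0) (hb' : b' ≠ 0) :
    chordal (some (a / b)) (some (a' / b')) =
      ‖a * b' - a' * b‖ / (√(‖a‖ ^ 2 + ‖b‖ ^ 2) * √(‖a'‖ ^ 2 + ‖b'‖ ^ 2)) := by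
  have hsub : a' / b' - a / b = -(a * b' - a' * b) / (b * b') := by
    field_simp
    ring
  simp only [chordal]
  rw [sqrt_norm_sq_add_norm_sq_eq hb, sqrt_norm_sq_add_norm_sq_eq hb', hsub, norm_div, norm_neg,
    norm_mul]
  have := norm_pos_iff.2 hb
  have := norm_pos_iff.2 hb'
  field_simp

lemma norm_sub_le_of_chordal_le {x f : ℂ} {ε : ℝ} (hε : ε * √(1 + ‖f‖ ^ 2) ≤ 1 / 2)
    (h : chordal (some x) (some f) ≤ ε) :
    ‖x - f‖ ≤ 2 * (ε * √(1 + ‖f‖ ^ 2)) * (1 + ‖f‖) := by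
  have hε0 : 0 ≤ ε := (chordal_nonneg _ _).trans h
  have hxf : ‖x - f‖ ≤ ε * √(1 + ‖f‖ ^ 2) * √(1 + ‖x‖ ^ 2) := by
    simp only [chordal] at h
    rw [div_le_iff₀ (by positivity), norm_sub_rev] at h
    linarith
  have hx' : √(1 + ‖x‖ ^ 2) ≤ 1 + ‖f‖ + ‖x - f‖ :=
    (sqrt_one_add_norm_sq_le x).trans (by linarith [norm_le_norm_add_norm_sub' x f])
  have hK : 0 ≤ ε * √(1 + ‖f‖ ^ 2) := by positivity
  nlinarith [mul_le_mul_of_nonneg_left hx' hK, mul_nonneg (sub_nonneg.2 hε) (norm_nonneg (x - f))]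

lemma eventually_exists_eq_some_norm_sub_le_of_tendsto_chordal {α : Type*} {l : Filter α}
    {o : α → Option ℂ} {f : ℂ} (h : Tendsto (fun i => chordal (o i) (some f)) l (𝓝 0))
    {η : ℝ} (hη : 0 < η) : ∀ᶠ i in l, ∃ x, o i = some x ∧ ‖x - f‖ ≤ η := by
  set Q := √(1 + ‖f‖ ^ 2)
  have hQ : 1 ≤ Q := Real.one_le_sqrt.2 (le_add_of_nonneg_right (by positivity))
  set ε := min (1 / (2 * Q)) (η / (2 * Q * (1 + ‖f‖)))
  have hε : 0 < ε := lt_min (by positivity) (by positivity)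
  have hεQ : ε * Q ≤ 1 / 2 := by
    calc ε * Q ≤ 1 / (2 * Q) * Q := by gcongr; exact min_le_left _ _
      _ = 1 / 2 := by field_simp
  filter_upwards [h.eventually (gt_mem_nhds hε)] with i hi
  match hoi : o i with
  | none =>
    rw [hoi] at hi
    have : ε < 1 / Q := by
      calc ε ≤ 1 / (2 * Q) := min_le_left _ _
        _ < 1 / Q := by gcongr; linarith
    exact absurd hi (not_lt.2 this.le)
  | some x =>
    rw [hoi] at hi
    refine ⟨x, rfl, (norm_sub_le_of_chordal_le hεQ hi.le).trans ?_⟩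
    calc 2 * (ε * Q) * (1 + ‖f‖) ≤ 2 * (η / (2 * Q * (1 + ‖f‖)) * Q) * (1 + ‖f‖) := by
          gcongr; exact min_le_right _ _
      _ = η := by field_simp

lemma mul_sqrt_le_norm_sub_mul {p q f g x : ℂ} (hpq : ¬(p = 0 ∧ q = 0))
    (hg : ‖p / q - g‖ ≤ ‖f - g‖ / 2) (hx : ‖x - f‖ ≤ ‖f - g‖ / 4) :
    ‖f - g‖ / (4 * (1 + ‖g‖ + ‖f - g‖)) * √(‖p‖ ^ 2 + ‖q‖ ^ 2) ≤ ‖p - x * q‖ := by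
  set r := ‖f - g‖
  have hr : 0 ≤ r := norm_nonneg _
  by_cases hq : q = 0
  · subst hq
    have hc : r / (4 * (1 + ‖g‖ + r)) ≤ 1 :=
      (div_le_one (by positivity)).2 (by nlinarith [norm_nonneg g])
    simpa [Real.sqrt_sq (norm_nonneg p)] using mul_le_of_le_one_left (norm_nonneg p) hc
  set t := p / q
  have htx : r / 4 ≤ ‖t - x‖ := by
    linarith [norm_sub_le_norm_sub_add_norm_sub f x g, norm_sub_le_norm_sub_add_norm_sub x t g,
      norm_sub_rev f x, norm_sub_rev x t]
  have ht : √(1 + ‖t‖ ^ 2) ≤ 1 + ‖g‖ + r := by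
    refine (sqrt_one_add_norm_sq_le t).trans ?_
    linarith [norm_le_norm_add_norm_sub' t g]
  have hpx : p - x * q = (t - x) * q := by
    simp only [t]
    field_simp
  rw [sqrt_norm_sq_add_norm_sq_eq hq, hpx, norm_mul, ← mul_assoc]
  gcongr
  calc r / (4 * (1 + ‖g‖ + r)) * √(1 + ‖t‖ ^ 2)
      ≤ r / (4 * (1 + ‖g‖ + r)) * (1 + ‖g‖ + r) := by gcongr
    _ = r / 4 := by field_simp
    _ ≤ ‖t - x‖ := htx

lemma eventually_nhdsGT_eventually_mul_sqrt_le_norm_sub_mul {α : Type*} {l : Filter α}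
    {p q : α → ℂ} {f g : ℂ} (hpq : ∀ i, ¬(p i = 0 ∧ q i = 0))
    (hlim : Tendsto (fun i => p i / q i) l (𝓝 g)) (hfg : f ≠ g) :
    ∀ᶠ c in 𝓝[>] 0, ∀ᶠ i in l, ∀ x, ‖x - f‖ ≤ c →
      c * √(‖p i‖ ^ 2 + ‖q i‖ ^ 2) ≤ ‖p i - x * q i‖ := by
  set r := ‖f - g‖
  have hr : 0 < r := norm_pos_iff.2 (sub_ne_zero.2 hfg)
  have hr4 : r / (4 * (1 + ‖g‖ + r)) ≤ r / 4 := by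
    rw [div_le_div_iff_of_pos_left hr (by positivity) four_pos]
    nlinarith [norm_nonneg g]
  filter_upwards [Ioc_mem_nhdsGT (by positivity : 0 < r / (4 * (1 + ‖g‖ + r)))] with c hc
  filter_upwards [hlim.eventually (Metric.closedBall_mem_nhds g (half_pos hr))] with i hi x hx
  rw [dist_eq_norm] at hi
  exact (mul_le_mul_of_nonneg_right hc.2 (Real.sqrt_nonneg _)).trans
    (mul_sqrt_le_norm_sub_mul (hpq i) hi ((hx.trans hc.2).trans hr4))

lemma eq_some_of_modApprox_eq_some {A B : ℕ → ℂ} {n : ℕ} {o : Option ℂ} {x : ℂ}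
    (h : modApprox A B n o = some x) (hx : A n - x * B n ≠ 0) :
    o = some ((A (n + 1) - x * B (n + 1)) / (x * B n - A n)) := by
  cases o with
  | none =>
    simp only [modApprox] at h
    split_ifs at h with hB
    cases Option.some.inj h
    exact absurd (by field_simp; ring) hx
  | some u =>
    simp only [modApprox] at h
    split_ifs at h with hden
    have hx' : x * B n - A n ≠ 0 := fun h0 => hx (by linear_combination -h0)
    have hxu : x * (B (n + 1) + u * B n) = A (n + 1) + u * A n :=
      (eq_div_iff hden).1 (Option.some.inj h).symm
    rw [Option.some_inj, eq_div_iff hx']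
    linear_combination hxu

lemma chordal_mobius_inv_le {A₀ A₁ B₀ B₁ x y : ℂ} {δ : ℝ} (hδ : 0 < δ)
    (hx : A₀ - x * B₀ ≠ 0) (hy : A₀ - y * B₀ ≠ 0)
    (hx₀ : δ * √(‖A₀‖ ^ 2 + ‖B₀‖ ^ 2) ≤ ‖A₀ - x * B₀‖)
    (hx₁ : δ * √(‖A₁‖ ^ 2 + ‖B₁‖ ^ 2) ≤ ‖A₁ - x * B₁‖)
    (hy₀ : δ * √(‖A₀‖ ^ 2 + ‖B₀‖ ^ 2) ≤ ‖A₀ - y * B₀‖)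
    (hy₁ : δ * √(‖A₁‖ ^ 2 + ‖B₁‖ ^ 2) ≤ ‖A₁ - y * B₁‖) :
    chordal (some ((A₁ - x * B₁) / (x * B₀ - A₀))) (some ((A₁ - y * B₁) / (y * B₀ - A₀)))
      ≤ ‖x - y‖ / (2 * δ ^ 2) := by
  set S := ‖A₁‖ ^ 2 + ‖B₁‖ ^ 2 + (‖A₀‖ ^ 2 + ‖B₀‖ ^ 2)
  have hdet : 2 * ‖A₁ * B₀ - A₀ * B₁‖ ≤ S := by
    have := norm_sub_le (A₁ * B₀) (A₀ * B₁)
    rw [norm_mul, norm_mul] at this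
    nlinarith [sq_nonneg (‖A₁‖ - ‖B₀‖), sq_nonneg (‖A₀‖ - ‖B₁‖)]
  have hnorm : ∀ z : ℂ, δ * √(‖A₀‖ ^ 2 + ‖B₀‖ ^ 2) ≤ ‖A₀ - z * B₀‖ →
      δ * √(‖A₁‖ ^ 2 + ‖B₁‖ ^ 2) ≤ ‖A₁ - z * B₁‖ →
      δ * √S ≤ √(‖A₁ - z * B₁‖ ^ 2 + ‖z * B₀ - A₀‖ ^ 2) := by
    intro z h₀ h₁
    refine Real.le_sqrt_of_sq_le ?_
    rw [norm_sub_rev (z * B₀)]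
    have e : ∀ s : ℝ, 0 ≤ s → (δ * √s) ^ 2 = δ ^ 2 * s := fun s hs => by
      rw [mul_pow, Real.sq_sqrt hs]
    rw [e S (by positivity)]
    nlinarith [pow_le_pow_left₀ (by positivity) h₀ 2, pow_le_pow_left₀ (by positivity) h₁ 2,
      e (‖A₀‖ ^ 2 + ‖B₀‖ ^ 2) (by positivity), e (‖A₁‖ ^ 2 + ‖B₁‖ ^ 2) (by positivity)]
  have hx' : x * B₀ - A₀ ≠ 0 := fun h => hx (by linear_combination -h)
  have hy' : y * B₀ - A₀ ≠ 0 := fun h => hy (by linear_combination -h)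
  have hpos : ∀ a b : ℂ, b ≠ 0 → 0 < √(‖a‖ ^ 2 + ‖b‖ ^ 2) := fun a b hb =>
    sqrt_norm_sq_add_norm_sq_pos fun h => hb h.2
  rw [chordal_some_div_some_div hx' hy', div_le_div_iff₀ (mul_pos (hpos _ _ hx') (hpos _ _ hy'))
    (by positivity), show (A₁ - x * B₁) * (y * B₀ - A₀) - (A₁ - y * B₁) * (x * B₀ - A₀)
      = (y - x) * (A₁ * B₀ - A₀ * B₁) by ring, norm_mul, norm_sub_rev y]
  have hS : (δ * √S) * (δ * √S) = δ ^ 2 * S := by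
    rw [mul_mul_mul_comm, Real.mul_self_sqrt (by positivity), sq]
  calc ‖x - y‖ * ‖A₁ * B₀ - A₀ * B₁‖ * (2 * δ ^ 2) ≤ ‖x - y‖ * ((δ * √S) * (δ * √S)) := by
        rw [hS, mul_assoc]
        refine mul_le_mul_of_nonneg_left ?_ (norm_nonneg _)
        linarith [mul_le_mul_of_nonneg_left hdet (sq_nonneg δ)]
    _ ≤ _ := by
        gcongr
        exacts [hnorm x hx₀ hx₁, hnorm y hy₀ hy₁]

lemma chordal_le_of_modApprox_eq_some {A B : ℕ → ℂ} {m : ℕ} {o o' : Option ℂ} {x y : ℂ}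
    {δ : ℝ} (hδ : 0 < δ) (hm : ¬(A m = 0 ∧ B m = 0))
    (ho : modApprox A B m o = some x) (ho' : modApprox A B m o' = some y)
    (hx₀ : δ * √(‖A m‖ ^ 2 + ‖B m‖ ^ 2) ≤ ‖A m - x * B m‖)
    (hx₁ : δ * √(‖A (m + 1)‖ ^ 2 + ‖B (m + 1)‖ ^ 2) ≤ ‖A (m + 1) - x * B (m + 1)‖)
    (hy₀ : δ * √(‖A m‖ ^ 2 + ‖B m‖ ^ 2) ≤ ‖A m - y * B m‖)
    (hy₁ : δ * √(‖A (m + 1)‖ ^ 2 + ‖B (m + 1)‖ ^ 2) ≤ ‖A (m + 1) - y * B (m + 1)‖) :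
    chordal o o' ≤ ‖x - y‖ / (2 * δ ^ 2) := by
  have hne : ∀ z, δ * √(‖A m‖ ^ 2 + ‖B m‖ ^ 2) ≤ ‖A m - z * B m‖ → A m - z * B m ≠ 0 :=
    fun z h => norm_pos_iff.1 ((mul_pos hδ (sqrt_norm_sq_add_norm_sq_pos hm)).trans_le h)
  rw [eq_some_of_modApprox_eq_some ho (hne x hx₀), eq_some_of_modApprox_eq_some ho' (hne y hy₀)]
  exact chordal_mobius_inv_le hδ (hne x hx₀) (hne y hy₀) hx₀ hx₁ hy₀ hy₁

lemma continuant_det_ne_zero {a b A B : ℕ → ℂ} (hane : ∀ i, 1 ≤ i → a i ≠ 0)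
    (hA : ∀ n, A (n + 2) = b (n + 1) * A (n + 1) + a (n + 1) * A n)
    (hB : ∀ n, B (n + 2) = b (n + 1) * B (n + 1) + a (n + 1) * B n)
    (h₀ : A 1 * B 0 - A 0 * B 1 ≠ 0) (m : ℕ) : A (m + 1) * B m - A m * B (m + 1) ≠ 0 := by
  induction m with
  | zero => exact h₀
  | succ k ih =>
    have hstep : A (k + 2) * B (k + 1) - A (k + 1) * B (k + 2)
        = -a (k + 1) * (A (k + 1) * B k - A k * B (k + 1)) := by
      rw [hA, hB]
      ring
    rw [hstep]
    exact mul_ne_zero (neg_ne_zero.2 (hane _ k.succ_pos)) ih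

theorem chordal_even_witnesses_tendsto_zero_general
    (a b A B : ℕ → ℂ) (f1 f2 f : ℂ)
    (v w : ℕ → Option ℂ)
    (hane : ∀ i, 1 ≤ i → a i ≠ 0)
    (hA0 : A 0 = 1) (hB0 : B 0 = 0) (hB1 : B 1 = 1)
    (hA : ∀ n, A (n + 2) = b (n + 1) * A (n + 1) + a (n + 1) * A n)
    (hB : ∀ n, B (n + 2) = b (n + 1) * B (n + 1) + a (n + 1) * B n)
    (hodd : Tendsto (fun n => A (2 * n + 2) / B (2 * n + 2)) atTop (𝓝 f1))
    (heven : Tendsto (fun n => A (2 * n + 1) / B (2 * n + 1)) atTop (𝓝 f2))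
    (hff1 : f ≠ f1) (hff2 : f ≠ f2)
    (hv : Tendsto (fun n => chordal (modApprox A B n (v n)) (some f)) atTop (𝓝 0))
    (hw : Tendsto (fun n => chordal (modApprox A B n (w n)) (some f)) atTop (𝓝 0)) :
    Tendsto (fun n => chordal (v (2 * n)) (w (2 * n))) atTop (𝓝 0) := by
  have hdet := continuant_det_ne_zero hane hA hB (by simp [hA0, hB0, hB1])
  have hnz : ∀ m, ¬(A m = 0 ∧ B m = 0) := fun m h => hdet m (by simp [h.1, h.2])
  have hodd' : Tendsto (fun n => A (2 * n) / B (2 * n)) atTop (𝓝 f1) :=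
    (tendsto_add_atTop_iff_nat 1).1 (by simpa only [mul_add, mul_one] using hodd)
  have h2n : Tendsto (fun n : ℕ => 2 * n) atTop atTop := tendsto_id.const_mul_atTop' two_pos
  obtain ⟨δ, ⟨hsep₀, hsep₁⟩, hδ : 0 < δ⟩ :=
    (((eventually_nhdsGT_eventually_mul_sqrt_le_norm_sub_mul (fun n => hnz _) hodd' hff1).and
      (eventually_nhdsGT_eventually_mul_sqrt_le_norm_sub_mul (fun n => hnz _) heven hff2)).and
      self_mem_nhdsWithin).exists
  refine Metric.tendsto_nhds.2 fun ε hε => ?_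
  set η := min δ (ε * δ ^ 2 / 2)
  have hη : 0 < η := lt_min hδ (by positivity)
  have hηδ : η ≤ δ := min_le_left _ _
  filter_upwards [hsep₀, hsep₁, eventually_exists_eq_some_norm_sub_le_of_tendsto_chordal
    (hv.comp h2n) hη, eventually_exists_eq_some_norm_sub_le_of_tendsto_chordal (hw.comp h2n) hη]
    with n h₀ h₁ ⟨x, hx, hxf⟩ ⟨y, hy, hyf⟩
  have hxy : ‖x - y‖ ≤ ε * δ ^ 2 := by
    linarith [norm_sub_le_norm_sub_add_norm_sub x f y, norm_sub_rev f y,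
      min_le_right δ (ε * δ ^ 2 / 2)]
  rw [Real.dist_eq, sub_zero, abs_of_nonneg (chordal_nonneg _ _)]
  have hxδ := hxf.trans hηδ
  have hyδ := hyf.trans hηδ
  calc _ ≤ ‖x - y‖ / (2 * δ ^ 2) := chordal_le_of_modApprox_eq_some hδ (hnz _) hx hy
          (h₀ x hxδ) (h₁ x hxδ) (h₀ y hyδ) (h₁ y hyδ)
    _ ≤ ε * δ ^ 2 / (2 * δ ^ 2) := by gcongr
    _ < ε := by
        rw [mul_div_mul_right _ _ (by positivity)]
        linarith

/-- Under the hypotheses of the general-divergence theorem (odd part of `C`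
converges to `f1`, even part to `f2`, `f1 ≠ f2`, bounds on `|b i|` and
`|a (2i+1)/a (2i)|`), if `C` converged generally to a finite value `f` with
`f ≠ f1` and `f ≠ f2`, witnessed by sequences `v`, `w`, then
`d(v (2n), w (2n)) → 0` (which contradicts `liminf d(v n, w n) > 0`); hence any
finite general limit must equal `f1` or `f2`. -/
theorem chordal_even_witnesses_tendsto_zero
    (a b A B : ℕ → ℂ) (f1 f2 f : ℂ) (c1 c2 c3 : ℝ)
    (v w : ℕ → Option ℂ)
    (hc1 : 0 < c1) (hc2 : 0 < c2) (hc3 : 0 < c3)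
    (hane : ∀ i, 1 ≤ i → a i ≠ 0)
    (hb : ∀ i, 1 ≤ i → c1 ≤ ‖b i‖ ∧ ‖b i‖ ≤ c2)
    (hratio : ∀ i, 1 ≤ i → ‖a (2 * i + 1) / a (2 * i)‖ ≤ c3)
    (hA0 : A 0 = 1) (hA1 : A 1 = b 0) (hB0 : B 0 = 0) (hB1 : B 1 = 1)
    (hA : ∀ n, A (n + 2) = b (n + 1) * A (n + 1) + a (n + 1) * A n)
    (hB : ∀ n, B (n + 2) = b (n + 1) * B (n + 1) + a (n + 1) * B n)
    (hodd : Tendsto (fun n => A (2 * n + 2) / B (2 * n + 2)) atTop (𝓝 f1))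
    (heven : Tendsto (fun n => A (2 * n + 1) / B (2 * n + 1)) atTop (𝓝 f2))
    (hf : f1 ≠ f2) (hff1 : f ≠ f1) (hff2 : f ≠ f2)
    (hv : Tendsto (fun n => chordal (modApprox A B n (v n)) (some f)) atTop (𝓝 0))
    (hw : Tendsto (fun n => chordal (modApprox A B n (w n)) (some f)) atTop (𝓝 0)) :
    Tendsto (fun n => chordal (v (2 * n)) (w (2 * n))) atTop (𝓝 0) :=
  chordal_even_witnesses_tendsto_zero_general a b A B f1 f2 f v w hane hA0 hB0 hB1 hA hB hodd heven
    hff1 hff2 hv hw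
end

section
/- Let G be the continued fraction 2/1 ∔ (−1)/2 ∔ K_{n=3}^∞ a_n/b_n where for n ≥ 1: a_{2n+1} = 1 + 1/(2n²) + 1/n, b_{2n+1} = −1/(2n³), a_{2n+2} = 2(n+1)³/(n(1+2n+2n²)), b_{2n+2} = (n+1)/(1+2n+2n²). Then the numerator and denominator convergents satisfy A_{2n-1} = n+1, A_{2n} = n + 3n², B_{2n-1} = n, B_{2n} = n² for all n ≥ 1. -/
open Filter Topology

/-!
Both `A` and `B` satisfy the same three-term recurrence, so they are determined by their
values at indices `2` and `3`. The pairs `(X (2n), X (2n+1)) = (n, n²)` and `(1, n + 2n²)`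
are two solutions of that recurrence for `n ≥ 1`, as one checks by clearing denominators in
one odd and one even step; `A` is their sum and `B` the first one.
-/

section ConvergentRecurrence

variable {K : Type*} [Field K]

lemma odd_step_eq (m c d : K) (h2 : (2 : K) ≠ 0) (hm : m ≠ 0) :
    -1 / (2 * m ^ 3) * (c * m ^ 2 + d * (m + 2 * m ^ 2)) +
        (1 + 1 / (2 * m ^ 2) + 1 / m) * (c * m + d) =
      c * (m + 1) + d := by
  field_simp
  ring

lemma even_step_eq (m c d : K) (hm : m ≠ 0) (hq : 1 + 2 * m + 2 * m ^ 2 ≠ 0) :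
    (m + 1) / (1 + 2 * m + 2 * m ^ 2) * (c * (m + 1) + d) +
        2 * (m + 1) ^ 3 / (m * (1 + 2 * m + 2 * m ^ 2)) * (c * m ^ 2 + d * (m + 2 * m ^ 2)) =
      c * (m + 1) ^ 2 + d * ((m + 1) + 2 * (m + 1) ^ 2) := by
  field_simp
  rw [div_eq_iff (by convert hq using 1; ring)]
  ring

variable [CharZero K]

theorem eq_of_convergent_recurrence (a b X : ℕ → K)
    (hao : ∀ n : ℕ, 1 ≤ n → a (2 * n + 1) = 1 + 1 / (2 * (n : K) ^ 2) + 1 / (n : K))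
    (hbo : ∀ n : ℕ, 1 ≤ n → b (2 * n + 1) = -1 / (2 * (n : K) ^ 3))
    (hae : ∀ n : ℕ, 1 ≤ n →
      a (2 * n + 2) = 2 * ((n : K) + 1) ^ 3 / ((n : K) * (1 + 2 * n + 2 * n ^ 2)))
    (hbe : ∀ n : ℕ, 1 ≤ n → b (2 * n + 2) = ((n : K) + 1) / (1 + 2 * n + 2 * n ^ 2))
    (hX : ∀ n, X (n + 2) = b (n + 1) * X (n + 1) + a (n + 1) * X n)
    (c d : K) (hX2 : X 2 = c + d) (hX3 : X 3 = c + 3 * d) :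
    ∀ n : ℕ, 1 ≤ n →
      X (2 * n) = c * n + d ∧ X (2 * n + 1) = c * n ^ 2 + d * (n + 2 * n ^ 2) := by
  intro n hn
  induction n, hn using Nat.le_induction with
  | base =>
    push_cast
    exact ⟨by rw [hX2]; ring, by rw [hX3]; ring⟩
  | succ m hm ih =>
    obtain ⟨hEven, hOdd⟩ := ih
    have hm0 : (m : K) ≠ 0 := Nat.cast_ne_zero.2 (by omega)
    have hq : 1 + 2 * (m : K) + 2 * (m : K) ^ 2 ≠ 0 := by
      exact_mod_cast (show 1 + 2 * m + 2 * m ^ 2 ≠ 0 by positivity)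
    have hEven' : X (2 * (m + 1)) = c * (m + 1 : ℕ) + d := by
      rw [show 2 * (m + 1) = 2 * m + 2 by ring, hX, hbo m hm, hao m hm, hEven, hOdd,
        odd_step_eq _ _ _ two_ne_zero hm0]
      push_cast
      ring
    refine ⟨hEven', ?_⟩
    rw [show 2 * (m + 1) + 1 = (2 * m + 1) + 2 by ring, hX,
      show 2 * m + 1 + 1 = 2 * m + 2 by ring, hbe m hm, hae m hm,
      show 2 * m + 2 = 2 * (m + 1) by ring, hEven', hOdd]
    push_cast
    exact even_step_eq _ _ _ hm0 hq

end ConvergentRecurrence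

/-- `A (m + 1)` and `B (m + 1)` are the convergents with subscript `m`. -/
theorem example_convergents_closed_form
    (a b A B : ℕ → ℂ)
    (ha1 : a 1 = 2) (hb1 : b 1 = 1) (ha2 : a 2 = -1) (hb2 : b 2 = 2)
    (hao : ∀ n : ℕ, 1 ≤ n →
      a (2 * n + 1) = 1 + 1 / (2 * (n : ℂ) ^ 2) + 1 / (n : ℂ))
    (hbo : ∀ n : ℕ, 1 ≤ n → b (2 * n + 1) = -1 / (2 * (n : ℂ) ^ 3))
    (hae : ∀ n : ℕ, 1 ≤ n →
      a (2 * n + 2) = 2 * ((n : ℂ) + 1) ^ 3 / ((n : ℂ) * (1 + 2 * n + 2 * n ^ 2)))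
    (hbe : ∀ n : ℕ, 1 ≤ n →
      b (2 * n + 2) = ((n : ℂ) + 1) / (1 + 2 * n + 2 * n ^ 2))
    (hA0 : A 0 = 1) (hA1 : A 1 = 0) (hB0 : B 0 = 0) (hB1 : B 1 = 1)
    (hA : ∀ n, A (n + 2) = b (n + 1) * A (n + 1) + a (n + 1) * A n)
    (hB : ∀ n, B (n + 2) = b (n + 1) * B (n + 1) + a (n + 1) * B n) :
    ∀ n : ℕ, 1 ≤ n →
      A (2 * n) = (n : ℂ) + 1 ∧ A (2 * n + 1) = (n : ℂ) + 3 * n ^ 2 ∧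
      B (2 * n) = (n : ℂ) ∧ B (2 * n + 1) = (n : ℂ) ^ 2 := by
  have hA2 : A 2 = 2 := by rw [hA 0, hA1, hA0, hb1, ha1]; ring
  have hA3 : A 3 = 4 := by rw [hA 1, hA2, hA1, hb2, ha2]; ring
  have hB2 : B 2 = 1 := by rw [hB 0, hB1, hB0, hb1, ha1]; ring
  have hB3 : B 3 = 1 := by rw [hB 1, hB2, hB1, hb2, ha2]; ring
  intro n hn
  obtain ⟨hAe, hAo⟩ := eq_of_convergent_recurrence a b A hao hbo hae hbe hA 1 1
    (by rw [hA2]; norm_num) (by rw [hA3]; norm_num) n hn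
  obtain ⟨hBe, hBo⟩ := eq_of_convergent_recurrence a b B hao hbo hae hbe hB 1 0
    (by rw [hB2]; norm_num) (by rw [hB3]; norm_num) n hn
  refine ⟨?_, ?_, ?_, ?_⟩
  · rw [hAe]; ring
  · rw [hAo]; ring
  · rw [hBe]; ring
  · rw [hBo]; ring
end

section
/- Under the hypothesis Σ_{n≥1} |b_n| < ∞, the convergents of b_0 + K_{n=1}^∞ 1/b_n satisfy: the limits P_0 = lim A_{2n}, P_1 = lim A_{2n+1}, Q_0 = lim B_{2n}, Q_1 = lim B_{2n+1} all exist and are finite, and P_1 Q_0 − P_0 Q_1 = 1. In particular, the odd and even approximants converge to distinct values P_1/Q_1 ≠ P_0/Q_0 (as points of the Riemann sphere). -/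
/-!
The convergents grow at most like `∏ (1 + ‖b n‖) ≤ exp (∑ ‖b n‖)`, so they are bounded. Then
`A (n + 2) - A n = b (n + 1) * A (n + 1)` is summable, hence the even and the odd convergents
are Cauchy. The determinant `A (n + 1) * B n - A n * B (n + 1) = (-1) ^ (n + 1)` equals `1` along
odd `n`, and passes to the limit.
-/

open Filter Topology Finset

section NormedRing

variable {R : Type*} [NormedRing R] {c A : ℕ → R}

theorem norm_le_max_mul_prod_of_recurrence (hA : ∀ n, A (n + 2) = c n * A (n + 1) + A n)
    (n : ℕ) :
    ‖A n‖ ≤ max ‖A 0‖ ‖A 1‖ * ∏ k ∈ range n, (1 + ‖c k‖) ∧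
      ‖A (n + 1)‖ ≤ max ‖A 0‖ ‖A 1‖ * ∏ k ∈ range n, (1 + ‖c k‖) := by
  induction n with
  | zero => simp
  | succ n ih =>
    set M := max ‖A 0‖ ‖A 1‖
    set P := ∏ k ∈ range n, (1 + ‖c k‖)
    have hP : 0 ≤ P := prod_nonneg fun k _ => by positivity
    rw [prod_range_succ]
    constructor
    · calc ‖A (n + 1)‖ ≤ M * P := ih.2
        _ ≤ M * (P * (1 + ‖c n‖)) := by
          gcongr
          exact le_mul_of_one_le_right hP (le_add_of_nonneg_right (norm_nonneg _))
    · calc ‖A (n + 1 + 1)‖ ≤ ‖c n‖ * ‖A (n + 1)‖ + ‖A n‖ := by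
            rw [hA n]
            exact (norm_add_le _ _).trans (by gcongr; exact norm_mul_le _ _)
        _ ≤ ‖c n‖ * (M * P) + M * P := by gcongr; exacts [ih.2, ih.1]
        _ = M * (P * (1 + ‖c n‖)) := by ring

theorem exists_norm_le_of_recurrence (hc : Summable (‖c ·‖))
    (hA : ∀ n, A (n + 2) = c n * A (n + 1) + A n) : ∃ M, ∀ n, ‖A n‖ ≤ M := by
  refine ⟨max ‖A 0‖ ‖A 1‖ * Real.exp (∑' k, ‖c k‖), fun n => ?_⟩
  refine (norm_le_max_mul_prod_of_recurrence hA n).1.trans ?_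
  gcongr
  calc ∏ k ∈ range n, (1 + ‖c k‖) ≤ Real.exp (∑ k ∈ range n, ‖c k‖) :=
        Real.prod_one_add_le_exp_sum _ fun k => norm_nonneg _
    _ ≤ Real.exp (∑' k, ‖c k‖) :=
        Real.exp_le_exp.2 (hc.sum_le_tsum _ fun k _ => norm_nonneg _)

theorem summable_norm_sub_of_recurrence (hc : Summable (‖c ·‖))
    (hA : ∀ n, A (n + 2) = c n * A (n + 1) + A n) :
    Summable fun n => ‖A (n + 2) - A n‖ := by
  obtain ⟨M, hM⟩ := exists_norm_le_of_recurrence hc hA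
  refine (hc.mul_right M).of_nonneg_of_le (fun _ => norm_nonneg _) fun n => ?_
  rw [hA n, add_sub_cancel_right]
  exact (norm_mul_le _ _).trans (by gcongr; exact hM _)

theorem exists_tendsto_two_mul_add_of_recurrence [CompleteSpace R] (hc : Summable (‖c ·‖))
    (hA : ∀ n, A (n + 2) = c n * A (n + 1) + A n) (j : ℕ) :
    ∃ P, Tendsto (fun n => A (2 * n + j)) atTop (𝓝 P) := by
  refine cauchySeq_tendsto_of_complete (cauchySeq_of_summable_dist ?_)
  have hinj : Function.Injective fun n : ℕ => 2 * n + j := fun x y h => by simpa using h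
  refine ((summable_norm_sub_of_recurrence hc hA).comp_injective hinj).congr fun n => ?_
  rw [dist_comm, dist_eq_norm, Function.comp_apply, Nat.succ_eq_add_one, mul_add_one,
    add_right_comm]

end NormedRing

theorem mul_sub_mul_eq_neg_one_pow_of_recurrence {R : Type*} [CommRing R] {c A B : ℕ → R}
    (hA : ∀ n, A (n + 2) = c n * A (n + 1) + A n)
    (hB : ∀ n, B (n + 2) = c n * B (n + 1) + B n) (n : ℕ) :
    A (n + 1) * B n - A n * B (n + 1) = (-1) ^ n * (A 1 * B 0 - A 0 * B 1) := by
  induction n with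
  | zero => simp
  | succ n ih =>
    rw [hA, hB]
    linear_combination -ih

/-- **Stern–Stolz theorem** (quantitative form).  If `Σ_{n≥1} |b n| < ∞`, then
for the continued fraction `b 0 + K_{n=1}^∞ 1 / b n` (convergents `A`, `B`,
with index `n+1` corresponding to subscript `n`) the limits
`P₀ = lim A_{2n}`, `P₁ = lim A_{2n+1}`, `Q₀ = lim B_{2n}`, `Q₁ = lim B_{2n+1}`
all exist (finite) and satisfy `P₁ Q₀ − P₀ Q₁ = 1`; in particular the odd and
even approximants converge to distinct values on the Riemann sphere, i.e.
`P₁ Q₀ ≠ P₀ Q₁`. -/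
theorem stern_stolz
    (b A B : ℕ → ℂ)
    (hsum : Summable (fun n : ℕ => ‖b (n + 1)‖))
    (hA0 : A 0 = 1) (hA1 : A 1 = b 0) (hB0 : B 0 = 0) (hB1 : B 1 = 1)
    (hA : ∀ n, A (n + 2) = b (n + 1) * A (n + 1) + A n)
    (hB : ∀ n, B (n + 2) = b (n + 1) * B (n + 1) + B n) :
    ∃ P0 P1 Q0 Q1 : ℂ,
      Tendsto (fun n => A (2 * n + 1)) atTop (𝓝 P0) ∧
      Tendsto (fun n => A (2 * n + 2)) atTop (𝓝 P1) ∧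
      Tendsto (fun n => B (2 * n + 1)) atTop (𝓝 Q0) ∧
      Tendsto (fun n => B (2 * n + 2)) atTop (𝓝 Q1) ∧
      P1 * Q0 - P0 * Q1 = 1 ∧
      P1 * Q0 ≠ P0 * Q1 := by
  obtain ⟨P0, hP0⟩ := exists_tendsto_two_mul_add_of_recurrence hsum hA 1
  obtain ⟨P1, hP1⟩ := exists_tendsto_two_mul_add_of_recurrence hsum hA 2
  obtain ⟨Q0, hQ0⟩ := exists_tendsto_two_mul_add_of_recurrence hsum hB 1
  obtain ⟨Q1, hQ1⟩ := exists_tendsto_two_mul_add_of_recurrence hsum hB 2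
  have hdet (n : ℕ) : A (2 * n + 2) * B (2 * n + 1) - A (2 * n + 1) * B (2 * n + 2) = 1 := by
    rw [mul_sub_mul_eq_neg_one_pow_of_recurrence hA hB (2 * n + 1), hA0, hA1, hB0, hB1,
      pow_succ, pow_mul]
    norm_num
  have hlim := (hP1.mul hQ0).sub (hP0.mul hQ1)
  simp only [hdet] at hlim
  have hdet_lim : P1 * Q0 - P0 * Q1 = 1 := (tendsto_const_nhds_iff.mp hlim).symm
  exact ⟨P0, P1, Q0, Q1, hP0, hP1, hQ0, hQ1, hdet_lim, sub_ne_zero.mp (hdet_lim ▸ one_ne_zero)⟩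
end
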